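/- arXiv:1607.02986 — 5 statements merged into one kernel-verified Lean document; each statement's English description precedes it below -/
import Mathlib

section
/- Let G = (X, Y, Q, Σ_X, Σ_Y, P) be a two-prover game in which Q is the uniform distribution over a set E ⊆ X × Y, let d_max be the maximum degree of a vertex in the bipartite graph (X, Y, E), and let r be a positive integer. If β ∈ [0, 1/2) satisfies r·d_max ≤ β·|E| and the set E^r_set is nonempty, then val(G^{⊗r}_set) ≤ (1/(1 − 2β))^r · val(G^{⊗r}). -/
open Finset

attribute [local instance] Classical.propDecidable

noncomputable section

set_option maxHeartbeats 1600000

/-- The value of a two-prover game with question sets `QX`, `QY`, answer sets `AX`, `AY`,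
question distribution `Q` and verification predicate `P`. -/
def gameVal {QX QY AX AY : Type*} [Fintype QX] [Fintype QY] [Fintype AX] [Fintype AY]
    [Nonempty AX] [Nonempty AY] (Q : QX → QY → ℝ) (P : QX → QY → AX → AY → Prop) : ℝ :=
  (Finset.univ : Finset ((QX → AX) × (QY → AY))).sup'
    ⟨(fun _ => Classical.arbitrary AX, fun _ => Classical.arbitrary AY), Finset.mem_univ _⟩
    fun φ => ∑ x : QX, ∑ y : QY, Q x y * (if P x y (φ.1 x) (φ.2 y) then 1 else 0)

/-- The uniform distribution over a finite set `E` of question pairs. -/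
def unifOn {QX QY : Type*} (E : Finset (QX × QY)) : QX → QY → ℝ :=
  fun x y => if (x, y) ∈ E then (E.card : ℝ)⁻¹ else 0

/-- Maximum degree of a vertex in the bipartite graph `(X, Y, E)`. -/
def maxDeg {X Y : Type*} [Fintype X] [Fintype Y] (E : Finset (X × Y)) : ℕ :=
  max (Finset.univ.sup fun x : X => (E.filter fun e => e.1 = x).card)
      (Finset.univ.sup fun y : Y => (E.filter fun e => e.2 = y).card)

/-- The predicate of a birthday-repetition game: all edges between `S` and `T` must be
answered acceptably. -/
def bPred {X Y AX AY : Type*} (E : Finset (X × Y)) (P : X → Y → AX → AY → Prop) :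
    Finset X → Finset Y → (X → AX) → (Y → AY) → Prop :=
  fun S T a b => ∀ x ∈ S, ∀ y ∈ T, (x, y) ∈ E → P x y (a x) (b y)

/-- Value of the `(k × l)`-birthday repetition `G^{k×l}`: questions are uniformly random
`k`-subsets of `X` and `l`-subsets of `Y`. -/
def birthdayVal {X Y AX AY : Type*} [Fintype X] [Fintype Y] [Fintype AX] [Fintype AY]
    [Nonempty AX] [Nonempty AY] (E : Finset (X × Y)) (P : X → Y → AX → AY → Prop)
    (k l : ℕ) : ℝ :=
  gameVal
    (fun (S : Finset X) (T : Finset Y) =>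
      if S.card = k ∧ T.card = l then
        (((Fintype.card X).choose k : ℝ) * ((Fintype.card Y).choose l : ℝ))⁻¹
      else 0)
    (bPred E P)

/-- Value of the `r`-fold parallel repetition `G^{⊗r}`. -/
def parVal {X Y AX AY : Type*} [Fintype X] [Fintype Y] [Fintype AX] [Fintype AY]
    [Nonempty AX] [Nonempty AY] (Q : X → Y → ℝ) (P : X → Y → AX → AY → Prop) (r : ℕ) : ℝ :=
  gameVal (fun (xs : Fin r → X) (ys : Fin r → Y) => ∏ i, Q (xs i) (ys i))
    (fun xs ys (a : Fin r → AX) (b : Fin r → AY) => ∀ i, P (xs i) (ys i) (a i) (b i))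

/-- `E^r_set` : tuples of `r` edges of `E` whose endpoints are all distinct. -/
def ErSet {X Y : Type*} [Fintype X] [Fintype Y] (E : Finset (X × Y)) (r : ℕ) :
    Finset ((Fin r → X) × (Fin r → Y)) :=
  Finset.univ.filter fun p =>
    (∀ i, (p.1 i, p.2 i) ∈ E) ∧ Function.Injective p.1 ∧ Function.Injective p.2

/-- Value of `G^{⊗r}_set are`, the parallel repetition with question distribution uniform
over `E^r_set`. -/
def parSetVal {X Y AX AY : Type*} [Fintype X] [Fintype Y] [Fintype AX] [Fintype AY]
    [Nonempty AX] [Nonempty AY] (E : Finset (X × Y)) (P : X → Y → AX → AY → Prop)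
    (r : ℕ) : ℝ :=
  gameVal (fun xs ys => if (xs, ys) ∈ ErSet E r then ((ErSet E r).card : ℝ)⁻¹ else 0)
    (fun xs ys (a : Fin r → AX) (b : Fin r → AY) => ∀ i, P (xs i) (ys i) (a i) (b i))

/-- The distribution `Q^{k×l}_em`: sample a tuple of `r` disjoint edges uniformly from
`E^r_set`, then complete the endpoints to a uniformly random `k`-subset of `X` and
`l`-subset of `Y`. -/
def Qem {X Y : Type*} [Fintype X] [Fintype Y] (E : Finset (X × Y)) (r k l : ℕ) :
    Finset X → Finset Y → ℝ :=
  fun S T =>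
    ((ErSet E r).card : ℝ)⁻¹ *
      ∑ p ∈ ErSet E r,
        (if S.card = k ∧ T.card = l ∧ (∀ i, p.1 i ∈ S) ∧ (∀ i, p.2 i ∈ T) then
            (((Fintype.card X - r).choose (k - r) : ℝ) *
              ((Fintype.card Y - r).choose (l - r) : ℝ))⁻¹
          else 0)

/-- Value of `G^{k×l}_em`. -/
def birthdayEmVal {X Y AX AY : Type*} [Fintype X] [Fintype Y] [Fintype AX] [Fintype AY]
    [Nonempty AX] [Nonempty AY] (E : Finset (X × Y)) (P : X → Y → AX → AY → Prop)
    (r k l : ℕ) : ℝ :=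
  gameVal (Qem E r k l) (bPred E P)

/-- `|E(S, T)|`, the number of edges between `S` and `T`. -/
def edgeCount {X Y : Type*} (E : Finset (X × Y)) (S : Finset X) (T : Finset Y) : ℕ :=
  (E.filter fun e => e.1 ∈ S ∧ e.2 ∈ T).card

/-- The event `(1 - δ)·s ≤ |E(S,T)| ≤ (1 + δ)·s`. -/
def inRange {X Y : Type*} (E : Finset (X × Y)) (s δ : ℝ) (S : Finset X) (T : Finset Y) :
    Prop :=
  (1 - δ) * s ≤ (edgeCount E S T : ℝ) ∧ (edgeCount E S T : ℝ) ≤ (1 + δ) * s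

/-- Conditioning a distribution on an event `A`. -/
def condOn {QX QY : Type*} [Fintype QX] [Fintype QY] (Q : QX → QY → ℝ)
    (A : QX → QY → Prop) : QX → QY → ℝ :=
  fun x y =>
    if A x y then Q x y / (∑ x' : QX, ∑ y' : QY, if A x' y' then Q x' y' else 0) else 0

/-- Value of `G^{k×l}_{em,[s₁,s₂]}`. -/
def birthdayEmCondVal {X Y AX AY : Type*} [Fintype X] [Fintype Y] [Fintype AX] [Fintype AY]
    [Nonempty AX] [Nonempty AY] (E : Finset (X × Y)) (P : X → Y → AX → AY → Prop)
    (r k l : ℕ) (s δ : ℝ) : ℝ :=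
  gameVal (condOn (Qem E r k l) (inRange E s δ)) (bPred E P)

/-- The set `E^{k×l}_{[s₁,s₂]}` of pairs `(S, T)` with `|S| = k`, `|T| = l` and
`(1-δ)·s ≤ |E(S,T)| ≤ (1+δ)·s`. -/
def rangeSet {X Y : Type*} [Fintype X] [Fintype Y] (E : Finset (X × Y)) (k l : ℕ)
    (s δ : ℝ) : Finset (Finset X × Finset Y) :=
  Finset.univ.filter fun p => p.1.card = k ∧ p.2.card = l ∧ inRange E s δ p.1 p.2

/-- Value of `G^{k×l}_{[s₁,s₂]}`. -/
def birthdayRangeVal {X Y AX AY : Type*} [Fintype X] [Fintype Y] [Fintype AX] [Fintype AY]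
    [Nonempty AX] [Nonempty AY] (E : Finset (X × Y)) (P : X → Y → AX → AY → Prop)
    (k l : ℕ) (s δ : ℝ) : ℝ :=
  gameVal
    (fun S T => if (S, T) ∈ rangeSet E k l s δ then ((rangeSet E k l s δ).card : ℝ)⁻¹ else 0)
    (bPred E P)


lemma snoc_injective' {n : ℕ} {α : Type*} {f : Fin n → α} {a : α} (hf : Function.Injective f)
    (ha : ∀ i, a ≠ f i) : Function.Injective (Fin.snoc f a : Fin (n+1) → α) := by
  intro i j h
  rcases Fin.eq_castSucc_or_eq_last i with ⟨i', rfl⟩ | rfl <;>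
    rcases Fin.eq_castSucc_or_eq_last j with ⟨j', rfl⟩ | rfl
  · simp only [Fin.snoc_castSucc] at h; exact congrArg _ (hf h)
  · simp only [Fin.snoc_castSucc, Fin.snoc_last] at h; exact absurd h.symm (ha i')
  · simp only [Fin.snoc_castSucc, Fin.snoc_last] at h; exact absurd h (ha j')
  · rfl

lemma erSet_zero_card {X Y : Type*} [Fintype X] [Fintype Y] (E : Finset (X × Y)) :
    (ErSet E 0).card = 1 := by
  have : ErSet E 0 = Finset.univ := by
    apply Finset.filter_true_of_mem
    intro p _
    refine ⟨fun i => i.elim0, fun i => i.elim0, fun i => i.elim0⟩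
  rw [this, Finset.card_univ]
  simp

lemma erSet_card_step {X Y : Type*} [Fintype X] [Fintype Y] (E : Finset (X × Y)) (m : ℕ) :
    (ErSet E m).card * (E.card - 2 * m * maxDeg E) ≤ (ErSet E (m+1)).card := by
  classical
  set d := maxDeg E with hd
  -- allowed edges for a partial tuple p
  set allowed : (Fin m → X) × (Fin m → Y) → Finset (X × Y) :=
    fun p => E.filter fun e => (∀ i, e.1 ≠ p.1 i) ∧ (∀ i, e.2 ≠ p.2 i) with hallowed
  have hcard_allowed : ∀ p, E.card - 2 * m * d ≤ (allowed p).card := by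
    intro p
    have hsplit := Finset.card_filter_add_card_filter_not
      (s := E) (p := fun e => (∀ i, e.1 ≠ p.1 i) ∧ (∀ i, e.2 ≠ p.2 i))
    have hbad : (E.filter fun e => ¬((∀ i, e.1 ≠ p.1 i) ∧ (∀ i, e.2 ≠ p.2 i))).card
        ≤ 2 * m * d := by
      have hsub : (E.filter fun e => ¬((∀ i, e.1 ≠ p.1 i) ∧ (∀ i, e.2 ≠ p.2 i)))
          ⊆ (Finset.univ.biUnion fun i : Fin m => E.filter fun e => e.1 = p.1 i)
            ∪ (Finset.univ.biUnion fun i : Fin m => E.filter fun e => e.2 = p.2 i) := by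
        intro e he
        simp only [Finset.mem_filter, not_and_or, not_forall, not_not] at he
        obtain ⟨heE, h | h⟩ := he
        · obtain ⟨i, hi⟩ := h
          exact Finset.mem_union_left _ (Finset.mem_biUnion.2 ⟨i, Finset.mem_univ i,
            Finset.mem_filter.2 ⟨heE, not_not.mp (by simpa using hi)⟩⟩)
        · obtain ⟨i, hi⟩ := h
          exact Finset.mem_union_right _ (Finset.mem_biUnion.2 ⟨i, Finset.mem_univ i,
            Finset.mem_filter.2 ⟨heE, not_not.mp (by simpa using hi)⟩⟩)
      refine le_trans (Finset.card_le_card hsub) ?_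
      refine le_trans (Finset.card_union_le _ _) ?_
      have h1 : (Finset.univ.biUnion fun i : Fin m => E.filter fun e => e.1 = p.1 i).card
          ≤ m * d := by
        refine le_trans (Finset.card_biUnion_le) ?_
        calc (∑ i : Fin m, (E.filter fun e => e.1 = p.1 i).card)
            ≤ ∑ _i : Fin m, d := Finset.sum_le_sum fun i _ =>
              le_trans (Finset.le_sup (f := fun x : X => (E.filter fun e => e.1 = x).card)
                (Finset.mem_univ (p.1 i))) (le_max_left _ _)
          _ = m * d := by simp [Finset.sum_const, mul_comm]
      have h2 : (Finset.univ.biUnion fun i : Fin m => E.filter fun e => e.2 = p.2 i).card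
          ≤ m * d := by
        refine le_trans (Finset.card_biUnion_le) ?_
        calc (∑ i : Fin m, (E.filter fun e => e.2 = p.2 i).card)
            ≤ ∑ _i : Fin m, d := Finset.sum_le_sum fun i _ =>
              le_trans (Finset.le_sup (f := fun y : Y => (E.filter fun e => e.2 = y).card)
                (Finset.mem_univ (p.2 i))) (le_max_right _ _)
          _ = m * d := by simp [Finset.sum_const, mul_comm]
      calc _ ≤ m * d + m * d := add_le_add h1 h2
        _ = 2 * m * d := by ring
    have h3 : (allowed p).card + (E.filter fun e => ¬((∀ i, e.1 ≠ p.1 i) ∧ (∀ i, e.2 ≠ p.2 i))).card = E.card := hsplit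
    generalize hK : 2 * m * d = K at hbad ⊢
    omega
  -- the injection
  set F : (Fin m → X) × (Fin m → Y) → X × Y → (Fin (m+1) → X) × (Fin (m+1) → Y) :=
    fun p e => (Fin.snoc p.1 e.1, Fin.snoc p.2 e.2) with hF
  have hsub : ((ErSet E m).biUnion fun p => (allowed p).image (F p)) ⊆ ErSet E (m+1) := by
    intro q hq
    simp only [Finset.mem_biUnion, Finset.mem_image] at hq
    obtain ⟨p, hp, e, he, rfl⟩ := hq
    simp only [ErSet, Finset.mem_filter, Finset.mem_univ, true_and] at hp ⊢
    obtain ⟨hedge, hinj1, hinj2⟩ := hp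
    simp only [hallowed, Finset.mem_filter] at he
    obtain ⟨heE, h1, h2⟩ := he
    refine ⟨?_, snoc_injective' hinj1 h1, snoc_injective' hinj2 h2⟩
    intro i
    rcases Fin.eq_castSucc_or_eq_last i with ⟨j, rfl⟩ | rfl
    · simpa [hF, Fin.snoc_castSucc] using hedge j
    · simpa [hF, Fin.snoc_last] using heE
  have hdisj : (ErSet E m : Set ((Fin m → X) × (Fin m → Y))).PairwiseDisjoint
      fun p => (allowed p).image (F p) := by
    intro p hp p' hp' hne
    refine Finset.disjoint_left.2 fun q hq hq' => ?_
    simp only [Finset.mem_image] at hq hq'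
    obtain ⟨e, _, rfl⟩ := hq
    obtain ⟨e', _, heq⟩ := hq'
    apply hne
    have h1 : p'.1 = p.1 := by
      have := congrArg Prod.fst heq
      simpa [hF, Fin.init_snoc] using congrArg Fin.init this
    have h2 : p'.2 = p.2 := by
      have := congrArg Prod.snd heq
      simpa [hF, Fin.init_snoc] using congrArg Fin.init this
    exact Prod.ext h1.symm h2.symm
  have hinjF : ∀ p : (Fin m → X) × (Fin m → Y), Set.InjOn (F p) (allowed p) := by
    intro p e _ e' _ heq
    have h1 : e.1 = e'.1 := by
      have := congrArg (fun f : (Fin (m+1) → X) × (Fin (m+1) → Y) => f.1 (Fin.last m)) heq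
      simpa [hF, Fin.snoc_last] using this
    have h2 : e.2 = e'.2 := by
      have := congrArg (fun f : (Fin (m+1) → X) × (Fin (m+1) → Y) => f.2 (Fin.last m)) heq
      simpa [hF, Fin.snoc_last] using this
    exact Prod.ext h1 h2
  calc (ErSet E m).card * (E.card - 2 * m * d)
      = ∑ _p ∈ ErSet E m, (E.card - 2 * m * d) := by rw [Finset.sum_const, smul_eq_mul]
    _ ≤ ∑ p ∈ ErSet E m, ((allowed p).image (F p)).card := by
        refine Finset.sum_le_sum fun p _ => ?_
        rw [Finset.card_image_of_injOn (hinjF p)]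
        exact hcard_allowed p
    _ = ((ErSet E m).biUnion fun p => (allowed p).image (F p)).card :=
        (Finset.card_biUnion (fun p hp p' hp' h => hdisj hp hp' h)).symm
    _ ≤ (ErSet E (m+1)).card := Finset.card_le_card hsub


lemma erSet_card_ge {X Y : Type*} [Fintype X] [Fintype Y] (E : Finset (X × Y))
    (r : ℕ) (β : ℝ) (hβ0 : 0 ≤ β) (hβ1 : β < 1 / 2)
    (hβE : (r : ℝ) * (maxDeg E : ℝ) ≤ β * (E.card : ℝ)) :
    ((1 - 2 * β) * (E.card : ℝ)) ^ r ≤ ((ErSet E r).card : ℝ) := by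
  set d := maxDeg E with hd
  have key : ∀ m, m ≤ r → ((1 - 2 * β) * (E.card : ℝ)) ^ m ≤ ((ErSet E m).card : ℝ) := by
    intro m
    induction m with
    | zero => intro _; simp [erSet_zero_card]
    | succ m ih =>
      intro hm1
      have hm : m ≤ r := Nat.le_of_succ_le hm1
      have ihm := ih hm
      have hmd : (2 * m * d : ℝ) ≤ 2 * β * (E.card : ℝ) := by
        have h1 : (m : ℝ) * d ≤ (r : ℝ) * d := by
          have : (m : ℝ) ≤ r := by exact_mod_cast hm
          exact mul_le_mul_of_nonneg_right this (by positivity)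
        nlinarith [hβE]
      have hsub : (2 * m * d : ℕ) ≤ E.card := by
        have : (2 * m * d : ℝ) ≤ (E.card : ℝ) := by nlinarith
        exact_mod_cast this
      have hstep := erSet_card_step E m
      have hstepR : ((ErSet E m).card : ℝ) * ((E.card : ℝ) - 2 * m * d)
          ≤ ((ErSet E (m+1)).card : ℝ) := by
        have := (Nat.cast_le (α := ℝ)).2 hstep
        rw [Nat.cast_mul, Nat.cast_sub hsub] at this
        push_cast at this ⊢
        linarith
      have hfac : (1 - 2 * β) * (E.card : ℝ) ≤ (E.card : ℝ) - 2 * m * d := by nlinarith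
      have hnn : (0 : ℝ) ≤ (1 - 2 * β) * (E.card : ℝ) := by
        have : (0:ℝ) ≤ (E.card : ℝ) := by positivity
        nlinarith
      calc ((1 - 2 * β) * (E.card : ℝ)) ^ (m + 1)
          = ((1 - 2 * β) * (E.card : ℝ)) ^ m * ((1 - 2 * β) * (E.card : ℝ)) := by ring
        _ ≤ ((ErSet E m).card : ℝ) * ((E.card : ℝ) - 2 * m * d) :=
            mul_le_mul ihm hfac hnn (le_trans (pow_nonneg hnn m) ihm)
        _ ≤ ((ErSet E (m+1)).card : ℝ) := hstepR
  exact key r le_rfl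

lemma le_gameVal {QX QY AX AY : Type*} [Fintype QX] [Fintype QY] [Fintype AX] [Fintype AY]
    [Nonempty AX] [Nonempty AY] (Q : QX → QY → ℝ) (P : QX → QY → AX → AY → Prop)
    (φ : (QX → AX) × (QY → AY)) :
    (∑ x : QX, ∑ y : QY, Q x y * (if P x y (φ.1 x) (φ.2 y) then 1 else 0)) ≤ gameVal Q P := by
  rw [gameVal]
  exact Finset.le_sup'
    (fun φ : (QX → AX) × (QY → AY) =>
      ∑ x : QX, ∑ y : QY, Q x y * (if P x y (φ.1 x) (φ.2 y) then 1 else 0))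
    (Finset.mem_univ φ)

lemma gameVal_le {QX QY AX AY : Type*} [Fintype QX] [Fintype QY] [Fintype AX] [Fintype AY]
    [Nonempty AX] [Nonempty AY] (Q : QX → QY → ℝ) (P : QX → QY → AX → AY → Prop) {c : ℝ}
    (h : ∀ φ : (QX → AX) × (QY → AY),
      (∑ x : QX, ∑ y : QY, Q x y * (if P x y (φ.1 x) (φ.2 y) then 1 else 0)) ≤ c) :
    gameVal Q P ≤ c :=
  Finset.sup'_le _ _ fun φ _ => h φ

/-- **No-collision step.**  If `r·d_max ≤ β·|E|` with `0 ≤ β < 1/2` and `E^r_set ≠ ∅`, then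
`val(G^{⊗r}_set) ≤ (1/(1 − 2β))^r · val(G^{⊗r})`. -/
theorem parSetVal_le_parVal {X Y AX AY : Type*}
    [Fintype X] [Fintype Y] [Fintype AX] [Fintype AY] [Nonempty AX] [Nonempty AY]
    (E : Finset (X × Y)) (hE : E.Nonempty) (P : X → Y → AX → AY → Prop)
    (r : ℕ) (hr : 0 < r) (β : ℝ) (hβ0 : 0 ≤ β) (hβ1 : β < 1 / 2)
    (hβE : (r : ℝ) * (maxDeg E : ℝ) ≤ β * (E.card : ℝ))
    (hne : (ErSet E r).Nonempty) :
    parSetVal E P r ≤ (1 / (1 - 2 * β)) ^ r * parVal (unifOn E) P r := by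
  classical
  have h2β : (0:ℝ) < 1 - 2 * β := by linarith
  have hEc : (0:ℝ) < (E.card : ℝ) := by exact_mod_cast hE.card_pos
  have hkey := erSet_card_ge E r β hβ0 hβ1 hβE
  have hSet : (0:ℝ) < ((ErSet E r).card : ℝ) := by exact_mod_cast hne.card_pos
  have hC0 : (0:ℝ) ≤ (1 / (1 - 2 * β)) ^ r := by positivity
  rw [parSetVal, parVal]
  refine gameVal_le _ _ fun φ => ?_
  refine le_trans ?_ (mul_le_mul_of_nonneg_left (le_gameVal _ _ φ) hC0)
  rw [Finset.mul_sum]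
  refine Finset.sum_le_sum fun xs _ => ?_
  rw [Finset.mul_sum]
  refine Finset.sum_le_sum fun ys _ => ?_
  by_cases hmem : (xs, ys) ∈ ErSet E r
  · have hedge : ∀ i, (xs i, ys i) ∈ E :=
      ((Finset.mem_filter.mp hmem).2).1
    have hprod : (∏ i, unifOn E (xs i) (ys i)) = ((E.card : ℝ)⁻¹) ^ r := by
      calc (∏ i, unifOn E (xs i) (ys i))
          = ∏ _i : Fin r, ((E.card : ℝ))⁻¹ :=
            Finset.prod_congr rfl fun i _ => by simp [unifOn, hedge i]
        _ = ((E.card : ℝ)⁻¹) ^ r := by simp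
    rw [if_pos hmem, hprod, ← mul_assoc]
    refine mul_le_mul_of_nonneg_right ?_ (by split <;> norm_num)
    have heq : (1 / (1 - 2 * β)) ^ r * ((E.card : ℝ)⁻¹) ^ r
        = (((1 - 2 * β) * (E.card : ℝ)) ^ r)⁻¹ := by
      rw [← mul_pow, ← inv_pow]
      congr 1
      field_simp
    rw [heq]
    exact inv_anti₀ (by positivity) hkey
  · rw [if_neg hmem, zero_mul]
    have hp : (0:ℝ) ≤ ∏ i, unifOn E (xs i) (ys i) := by
      refine Finset.prod_nonneg fun i _ => ?_
      unfold unifOn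
      split <;> positivity
    exact mul_nonneg hC0 (mul_nonneg hp (by split <;> norm_num))
end
end

section
/- Let G = (X, Y, Q, Σ_X, Σ_Y, P) be a two-prover game in which Q is the uniform distribution over a set E ⊆ X × Y with maximum degree d_max, let 0 ≤ k ≤ |X|, 0 ≤ l ≤ |Y|, set s = k·l·|E|/(d_max·|X|·|Y|), let δ ∈ [0, 1/2], let r ≤ min(k, l) be a positive integer, and let β = r·d_max/s; suppose 0 < β ≤ δ/40, δ + 2β < 1, and the support of the conditioned distribution is nonempty. Then val(G^{k×l}_{[s1,s2]}) ≤ ((1+δ)/(1−δ−2β))^{2r} · val(G^{k×l}_{em,[s1,s2]}). -/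
open Finset

attribute [local instance] Classical.propDecidable

noncomputable section

namespace BirthdayAux

lemma cast_sub_le' (a b : ℕ) : (a : ℝ) - (b : ℝ) ≤ ((a - b : ℕ) : ℝ) := by
  rcases le_total b a with h | h
  · rw [Nat.cast_sub h]
  · have : a - b = 0 := Nat.sub_eq_zero_of_le h
    rw [this]
    simp only [Nat.cast_zero, sub_nonpos]
    exact_mod_cast h

lemma snoc_injective {n : ℕ} {α : Type*} {g : Fin n → α} {a : α}
    (hg : Function.Injective g) (ha : ∀ i, a ≠ g i) :
    Function.Injective (Fin.snoc g a : Fin (n + 1) → α) := by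
  intro i j h
  induction i using Fin.lastCases with
  | last =>
    induction j using Fin.lastCases with
    | last => rfl
    | cast j =>
      rw [Fin.snoc_last, Fin.snoc_castSucc] at h
      exact absurd h (ha j)
  | cast i =>
    induction j using Fin.lastCases with
    | last =>
      rw [Fin.snoc_last, Fin.snoc_castSucc] at h
      exact absurd h.symm (ha i)
    | cast j =>
      rw [Fin.snoc_castSucc, Fin.snoc_castSucc] at h
      rw [hg h]

variable {X Y : Type*} [Fintype X] [Fintype Y]

/-- Tuples of `r` pairwise disjoint edges of `E` with endpoints in `S`, `T`. -/
def Ar (E : Finset (X × Y)) (S : Finset X) (T : Finset Y) (r : ℕ) :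
    Finset ((Fin r → X) × (Fin r → Y)) :=
  Finset.univ.filter fun p =>
    (∀ i, (p.1 i, p.2 i) ∈ E) ∧ Function.Injective p.1 ∧ Function.Injective p.2 ∧
    (∀ i, p.1 i ∈ S) ∧ (∀ i, p.2 i ∈ T)

lemma mem_Ar {E : Finset (X × Y)} {S : Finset X} {T : Finset Y} {r : ℕ}
    {p : (Fin r → X) × (Fin r → Y)} :
    p ∈ Ar E S T r ↔
      (∀ i, (p.1 i, p.2 i) ∈ E) ∧ Function.Injective p.1 ∧ Function.Injective p.2 ∧
      (∀ i, p.1 i ∈ S) ∧ (∀ i, p.2 i ∈ T) := by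
  simp [Ar]

/-- Edges between `S` and `T` avoiding the endpoints of `q`. -/
def goodE (E : Finset (X × Y)) (S : Finset X) (T : Finset Y) {r : ℕ}
    (q : (Fin r → X) × (Fin r → Y)) : Finset (X × Y) :=
  E.filter fun f => f.1 ∈ S ∧ f.2 ∈ T ∧ (∀ i, f.1 ≠ q.1 i) ∧ (∀ i, f.2 ≠ q.2 i)

lemma card_Ar_succ (E : Finset (X × Y)) (S : Finset X) (T : Finset Y) (r : ℕ) :
    (Ar E S T (r + 1)).card = ∑ q ∈ Ar E S T r, (goodE E S T q).card := by
  rw [← Finset.card_sigma]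
  refine Finset.card_bij'
    (fun p _ => (⟨(Fin.init p.1, Fin.init p.2), (p.1 (Fin.last r), p.2 (Fin.last r))⟩ :
      Σ _ : (Fin r → X) × (Fin r → Y), X × Y))
    (fun q _ => (Fin.snoc q.1.1 q.2.1, Fin.snoc q.1.2 q.2.2)) ?_ ?_ ?_ ?_
  · intro p hp
    rw [mem_Ar] at hp
    obtain ⟨hE, h1, h2, hS, hT⟩ := hp
    refine Finset.mem_sigma.2 ⟨mem_Ar.2 ⟨fun i => hE _, ?_, ?_, fun i => hS _, fun i => hT _⟩, ?_⟩
    · exact fun a b h => Fin.castSucc_injective r (h1 h)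
    · exact fun a b h => Fin.castSucc_injective r (h2 h)
    · refine Finset.mem_filter.2 ⟨hE _, hS _, hT _, fun i h => ?_, fun i h => ?_⟩
      · exact absurd (h1 h) (Fin.castSucc_lt_last i).ne'
      · exact absurd (h2 h) (Fin.castSucc_lt_last i).ne'
  · rintro ⟨q, f⟩ hq
    obtain ⟨hq, hf⟩ := Finset.mem_sigma.1 hq
    rw [mem_Ar] at hq
    obtain ⟨hE, h1, h2, hS, hT⟩ := hq
    obtain ⟨hfE, hfS, hfT, hfx, hfy⟩ := Finset.mem_filter.1 hf
    refine mem_Ar.2 ⟨?_, ?_, ?_, ?_, ?_⟩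
    · intro i
      induction i using Fin.lastCases with
      | last => simpa [Fin.snoc_last] using hfE
      | cast i => simpa [Fin.snoc_castSucc] using hE i
    · exact snoc_injective h1 hfx
    · exact snoc_injective h2 hfy
    · intro i
      induction i using Fin.lastCases with
      | last => simpa [Fin.snoc_last] using hfS
      | cast i => simpa [Fin.snoc_castSucc] using hS i
    · intro i
      induction i using Fin.lastCases with
      | last => simpa [Fin.snoc_last] using hfT
      | cast i => simpa [Fin.snoc_castSucc] using hT i
  · intro p hp
    simp [Fin.snoc_init_self]
  · rintro ⟨q, f⟩ hq
    simp [Fin.init_snoc, Fin.snoc_last]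

lemma filter_fst_card_le (E : Finset (X × Y)) (x : X) :
    (E.filter fun e => e.1 = x).card ≤ maxDeg E :=
  le_trans (Finset.le_sup (f := fun x : X => (E.filter fun e => e.1 = x).card)
    (Finset.mem_univ x)) (le_max_left _ _)

lemma filter_snd_card_le (E : Finset (X × Y)) (y : Y) :
    (E.filter fun e => e.2 = y).card ≤ maxDeg E :=
  le_trans (Finset.le_sup (f := fun y : Y => (E.filter fun e => e.2 = y).card)
    (Finset.mem_univ y)) (le_max_right _ _)

lemma goodE_card_le (E : Finset (X × Y)) (S : Finset X) (T : Finset Y) {r : ℕ}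
    (q : (Fin r → X) × (Fin r → Y)) : (goodE E S T q).card ≤ edgeCount E S T := by
  apply Finset.card_le_card
  intro f hf
  obtain ⟨h1, h2, h3, _⟩ := Finset.mem_filter.1 hf
  exact Finset.mem_filter.2 ⟨h1, h2, h3⟩

lemma goodE_card_ge (E : Finset (X × Y)) (S : Finset X) (T : Finset Y) {r : ℕ}
    (q : (Fin r → X) × (Fin r → Y)) :
    edgeCount E S T - 2 * r * maxDeg E ≤ (goodE E S T q).card := by
  classical
  set E' := E.filter fun e => e.1 ∈ S ∧ e.2 ∈ T with hE'
  have hsplit : (goodE E S T q).card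
      + (E'.filter fun f => ¬ ((∀ i, f.1 ≠ q.1 i) ∧ (∀ i, f.2 ≠ q.2 i))).card
      = edgeCount E S T := by
    rw [edgeCount, ← hE',
      ← Finset.card_filter_add_card_filter_not
        (s := E') (p := fun f => (∀ i, f.1 ≠ q.1 i) ∧ (∀ i, f.2 ≠ q.2 i))]
    congr 1
    rw [hE', Finset.filter_filter, goodE]
    exact congrArg Finset.card (Finset.filter_congr fun e _ => by tauto)
  have hbad : (E'.filter fun f => ¬ ((∀ i, f.1 ≠ q.1 i) ∧ (∀ i, f.2 ≠ q.2 i))).card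
      ≤ 2 * r * maxDeg E := by
    have hsub : (E'.filter fun f => ¬ ((∀ i, f.1 ≠ q.1 i) ∧ (∀ i, f.2 ≠ q.2 i)))
        ⊆ (Finset.univ : Finset (Fin r)).biUnion
          (fun i => (E.filter fun e => e.1 = q.1 i) ∪ (E.filter fun e => e.2 = q.2 i)) := by
      intro f hf
      obtain ⟨hfE', hfc⟩ := Finset.mem_filter.1 hf
      have hfE : f ∈ E := (Finset.mem_filter.1 hfE').1
      rw [Finset.mem_biUnion]
      by_cases h : ∀ i, f.1 ≠ q.1 i
      · have h2 : ¬ ∀ i, f.2 ≠ q.2 i := fun hh => hfc ⟨h, hh⟩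
        push_neg at h2
        obtain ⟨i, hi⟩ := h2
        exact ⟨i, Finset.mem_univ i, Finset.mem_union_right _
          (Finset.mem_filter.2 ⟨hfE, hi⟩)⟩
      · push_neg at h
        obtain ⟨i, hi⟩ := h
        exact ⟨i, Finset.mem_univ i, Finset.mem_union_left _
          (Finset.mem_filter.2 ⟨hfE, hi⟩)⟩
    calc (E'.filter fun f => ¬ ((∀ i, f.1 ≠ q.1 i) ∧ (∀ i, f.2 ≠ q.2 i))).card
        ≤ _ := Finset.card_le_card hsub
      _ ≤ ∑ i : Fin r, ((E.filter fun e => e.1 = q.1 i) ∪ (E.filter fun e => e.2 = q.2 i)).card :=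
          Finset.card_biUnion_le
      _ ≤ ∑ _i : Fin r, (maxDeg E + maxDeg E) := by
          apply Finset.sum_le_sum
          intro i _
          exact le_trans (Finset.card_union_le _ _)
            (add_le_add (filter_fst_card_le E _) (filter_snd_card_le E _))
      _ = 2 * r * maxDeg E := by
          rw [Finset.sum_const, Finset.card_univ, Fintype.card_fin, smul_eq_mul]
          ring
  omega

lemma card_Ar_zero (E : Finset (X × Y)) (S : Finset X) (T : Finset Y) :
    (Ar E S T 0).card = 1 := by
  have : Ar E S T 0 = Finset.univ := by
    apply Finset.filter_true_of_mem
    intro p _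
    refine ⟨fun i => i.elim0, fun a => a.elim0, fun a => a.elim0, fun i => i.elim0,
      fun i => i.elim0⟩
  rw [this, Finset.card_univ]
  simp

lemma card_Ar_ge (E : Finset (X × Y)) (S : Finset X) (T : Finset Y) (r : ℕ) :
    ∏ i ∈ Finset.range r, (edgeCount E S T - 2 * i * maxDeg E) ≤ (Ar E S T r).card := by
  induction r with
  | zero => simp [card_Ar_zero]
  | succ r ih =>
    rw [Finset.prod_range_succ, card_Ar_succ]
    calc (∏ i ∈ Finset.range r, (edgeCount E S T - 2 * i * maxDeg E))
          * (edgeCount E S T - 2 * r * maxDeg E)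
        ≤ (Ar E S T r).card * (edgeCount E S T - 2 * r * maxDeg E) :=
          Nat.mul_le_mul_right _ ih
      _ = ∑ _q ∈ Ar E S T r, (edgeCount E S T - 2 * r * maxDeg E) := by
          rw [Finset.sum_const, smul_eq_mul]
      _ ≤ ∑ q ∈ Ar E S T r, (goodE E S T q).card :=
          Finset.sum_le_sum fun q _ => goodE_card_ge E S T q

lemma card_Ar_le (E : Finset (X × Y)) (S : Finset X) (T : Finset Y) (r : ℕ) :
    (Ar E S T r).card ≤ edgeCount E S T ^ r := by
  induction r with
  | zero => simp [card_Ar_zero]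
  | succ r ih =>
    rw [card_Ar_succ, pow_succ]
    calc ∑ q ∈ Ar E S T r, (goodE E S T q).card
        ≤ ∑ _q ∈ Ar E S T r, edgeCount E S T :=
          Finset.sum_le_sum fun q _ => goodE_card_le E S T q
      _ = (Ar E S T r).card * edgeCount E S T := by
          rw [Finset.sum_const, smul_eq_mul]
      _ ≤ edgeCount E S T ^ r * edgeCount E S T := Nat.mul_le_mul_right _ ih

lemma ErSet_filter (E : Finset (X × Y)) (r : ℕ) (S : Finset X) (T : Finset Y) :
    (ErSet E r).filter (fun p => (∀ i, p.1 i ∈ S) ∧ (∀ i, p.2 i ∈ T)) = Ar E S T r := by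
  ext p
  simp only [ErSet, Ar, Finset.mem_filter, Finset.mem_univ, true_and]
  tauto

lemma Qem_eq (E : Finset (X × Y)) (r k l : ℕ) (S : Finset X) (T : Finset Y) :
    Qem E r k l S T =
      if S.card = k ∧ T.card = l then
        (((ErSet E r).card : ℝ)⁻¹ *
          ((((Fintype.card X - r).choose (k - r)) : ℝ) *
            (((Fintype.card Y - r).choose (l - r)) : ℝ))⁻¹) * ((Ar E S T r).card : ℝ)
      else 0 := by
  rw [Qem]
  by_cases hc : S.card = k ∧ T.card = l
  · rw [if_pos hc]
    have h1 : ∀ p ∈ ErSet E r,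
        (if S.card = k ∧ T.card = l ∧ (∀ i, p.1 i ∈ S) ∧ (∀ i, p.2 i ∈ T) then
            (((Fintype.card X - r).choose (k - r) : ℝ) *
              ((Fintype.card Y - r).choose (l - r) : ℝ))⁻¹
          else 0)
        = (if (∀ i, p.1 i ∈ S) ∧ (∀ i, p.2 i ∈ T) then
            (((Fintype.card X - r).choose (k - r) : ℝ) *
              ((Fintype.card Y - r).choose (l - r) : ℝ))⁻¹
          else 0) := by
      intro p _
      simp [hc.1, hc.2]
    rw [Finset.sum_congr rfl h1, ← Finset.sum_filter, ErSet_filter, Finset.sum_const,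
      nsmul_eq_mul]
    ring
  · rw [if_neg hc, Finset.sum_eq_zero, mul_zero]
    intro p _
    rw [if_neg]
    tauto

lemma Qem_nonneg (E : Finset (X × Y)) (r k l : ℕ) (S : Finset X) (T : Finset Y) :
    0 ≤ Qem E r k l S T := by
  rw [Qem_eq]
  split
  · positivity
  · exact le_refl 0

lemma gameVal_nonneg {QX QY AX AY : Type*} [Fintype QX] [Fintype QY] [Fintype AX] [Fintype AY]
    [Nonempty AX] [Nonempty AY] (Q : QX → QY → ℝ) (P : QX → QY → AX → AY → Prop)
    (hQ : ∀ x y, 0 ≤ Q x y) : 0 ≤ gameVal Q P := by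
  rw [gameVal]
  refine le_trans ?_ (Finset.le_sup'
    (f := fun φ : (QX → AX) × (QY → AY) =>
      ∑ x : QX, ∑ y : QY, Q x y * (if P x y (φ.1 x) (φ.2 y) then 1 else 0))
    (Finset.mem_univ (fun _ => Classical.arbitrary AX, fun _ => Classical.arbitrary AY)))
  refine Finset.sum_nonneg fun x _ => Finset.sum_nonneg fun y _ => mul_nonneg (hQ x y) ?_
  split <;> norm_num

lemma gameVal_le_mul {QX QY AX AY : Type*} [Fintype QX] [Fintype QY] [Fintype AX] [Fintype AY]
    [Nonempty AX] [Nonempty AY] (Q1 Q2 : QX → QY → ℝ) (P : QX → QY → AX → AY → Prop)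
    (C : ℝ) (hC : 0 ≤ C) (h : ∀ x y, Q1 x y ≤ C * Q2 x y) :
    gameVal Q1 P ≤ C * gameVal Q2 P := by
  rw [gameVal, gameVal]
  apply Finset.sup'_le
  intro φ _
  calc ∑ x : QX, ∑ y : QY, Q1 x y * (if P x y (φ.1 x) (φ.2 y) then 1 else 0)
      ≤ ∑ x : QX, ∑ y : QY, C * (Q2 x y * (if P x y (φ.1 x) (φ.2 y) then 1 else 0)) := by
        refine Finset.sum_le_sum fun x _ => Finset.sum_le_sum fun y _ => ?_
        rw [← mul_assoc]
        refine mul_le_mul_of_nonneg_right (h x y) ?_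
        split <;> norm_num
    _ = C * ∑ x : QX, ∑ y : QY, Q2 x y * (if P x y (φ.1 x) (φ.2 y) then 1 else 0) := by
        rw [Finset.mul_sum]
        exact Finset.sum_congr rfl fun x _ => (Finset.mul_sum _ _ _).symm
    _ ≤ C * _ := by
        refine mul_le_mul_of_nonneg_left ?_ hC
        exact Finset.le_sup'
          (f := fun φ : (QX → AX) × (QY → AY) =>
            ∑ x : QX, ∑ y : QY, Q2 x y * (if P x y (φ.1 x) (φ.2 y) then 1 else 0))
          (Finset.mem_univ φ)

end BirthdayAux

/-- **Comparing the conditioned embedded distribution to the uniform conditioned one.**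
`val(G^{k×l}_{[s₁,s₂]}) ≤ ((1+δ)/(1−δ−2β))^{2r} · val(G^{k×l}_{em,[s₁,s₂]})`. -/
theorem birthdayRangeVal_le_birthdayEmCondVal {X Y AX AY : Type*}
    [Fintype X] [Fintype Y] [Fintype AX] [Fintype AY] [Nonempty AX] [Nonempty AY]
    (E : Finset (X × Y)) (hE : E.Nonempty) (P : X → Y → AX → AY → Prop)
    (k l : ℕ) (hk : k ≤ Fintype.card X) (hl : l ≤ Fintype.card Y)
    (s : ℝ)
    (hs : s = (k : ℝ) * (l : ℝ) * (E.card : ℝ) /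
        ((maxDeg E : ℝ) * (Fintype.card X : ℝ) * (Fintype.card Y : ℝ)))
    (δ : ℝ) (hδ0 : 0 ≤ δ) (hδ1 : δ ≤ 1 / 2)
    (r : ℕ) (hr : 0 < r) (hrk : r ≤ k) (hrl : r ≤ l)
    (β : ℝ) (hβ : β = (r : ℝ) * (maxDeg E : ℝ) / s) (hβ0 : 0 < β) (hβδ : β ≤ δ / 40)
    (hδβ : δ + 2 * β < 1) (hne : (ErSet E r).Nonempty)
    (hsupp : ∃ S T, inRange E s δ S T ∧ 0 < Qem E r k l S T) :
    birthdayRangeVal E P k l s δ ≤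
      ((1 + δ) / (1 - δ - 2 * β)) ^ (2 * r) * birthdayEmCondVal E P r k l s δ := by
  classical
  obtain ⟨e0, he0⟩ := hE
  have hd1 : 1 ≤ maxDeg E := by
    have h1 : 0 < (E.filter fun e => e.1 = e0.1).card :=
      Finset.card_pos.2 ⟨e0, Finset.mem_filter.2 ⟨he0, rfl⟩⟩
    exact le_trans h1 (BirthdayAux.filter_fst_card_le E e0.1)
  have hd0 : (0:ℝ) < (maxDeg E : ℝ) := by exact_mod_cast hd1
  have hr0 : (0:ℝ) < (r:ℝ) := by exact_mod_cast hr
  have hs0 : 0 < s := by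
    by_contra hs'
    push_neg at hs'
    have hble : β ≤ 0 := by
      rw [hβ]
      exact div_nonpos_of_nonneg_of_nonpos (by positivity) hs'
    linarith
  have hβs : β * s = (r:ℝ) * (maxDeg E : ℝ) := by
    rw [hβ]; field_simp
  have hw : 0 < 1 - δ - 2 * β := by linarith
  have h1δ : (0:ℝ) < 1 + δ := by linarith
  set C' : ℝ := ((1 + δ) / (1 - δ - 2 * β)) ^ r with hC'
  have hC'0 : 0 ≤ C' := by positivity
  set c0 : ℝ := ((ErSet E r).card : ℝ)⁻¹ *
      ((((Fintype.card X - r).choose (k - r)) : ℝ) *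
        (((Fintype.card Y - r).choose (l - r)) : ℝ))⁻¹ with hc0def
  have hc0 : 0 < c0 := by
    have h1 : (0:ℝ) < ((ErSet E r).card : ℝ) := by
      exact_mod_cast Finset.card_pos.2 hne
    have h2 : (0:ℝ) < (((Fintype.card X - r).choose (k - r)) : ℝ) := by
      exact_mod_cast Nat.choose_pos (Nat.sub_le_sub_right hk r)
    have h3 : (0:ℝ) < (((Fintype.card Y - r).choose (l - r)) : ℝ) := by
      exact_mod_cast Nat.choose_pos (Nat.sub_le_sub_right hl r)
    rw [hc0def]
    positivity
  -- lower and upper bounds on the number of embedded matchings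
  have hlow : ∀ S T, inRange E s δ S T →
      ((1 - δ - 2*β) * s) ^ r ≤ ((BirthdayAux.Ar E S T r).card : ℝ) := by
    intro S T hin
    have h1 : ((∏ i ∈ Finset.range r, (edgeCount E S T - 2 * i * maxDeg E) : ℕ) : ℝ)
        ≤ ((BirthdayAux.Ar E S T r).card : ℝ) := by
      exact_mod_cast BirthdayAux.card_Ar_ge E S T r
    refine le_trans ?_ h1
    rw [Nat.cast_prod]
    have hconst : ((1 - δ - 2*β) * s) ^ r
        = ∏ _i ∈ Finset.range r, ((1 - δ - 2*β) * s) := by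
      rw [Finset.prod_const, Finset.card_range]
    rw [hconst]
    refine Finset.prod_le_prod (fun i _ => by positivity) (fun i hi => ?_)
    refine le_trans ?_ (BirthdayAux.cast_sub_le' _ _)
    have hir : (i:ℝ) ≤ (r:ℝ) := by
      exact_mod_cast (Finset.mem_range.1 hi).le
    have hid : ((2 * i * maxDeg E : ℕ) : ℝ) ≤ 2 * β * s := by
      push_cast
      have h2 : (i:ℝ) * (maxDeg E:ℝ) ≤ (r:ℝ) * (maxDeg E:ℝ) :=
        mul_le_mul_of_nonneg_right hir hd0.le
      nlinarith [hβs]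
    have he1 : (1 - δ) * s ≤ (edgeCount E S T : ℝ) := hin.1
    nlinarith
  have hhigh : ∀ S T, inRange E s δ S T →
      ((BirthdayAux.Ar E S T r).card : ℝ) ≤ ((1 + δ) * s) ^ r := by
    intro S T hin
    have h1 : ((BirthdayAux.Ar E S T r).card : ℝ) ≤ ((edgeCount E S T : ℝ)) ^ r := by
      exact_mod_cast BirthdayAux.card_Ar_le E S T r
    exact le_trans h1 (pow_le_pow_left₀ (Nat.cast_nonneg _) hin.2 r)
  -- the normalising constant
  set Z : ℝ := ∑ S' : Finset X, ∑ T' : Finset Y,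
      if inRange E s δ S' T' then Qem E r k l S' T' else 0 with hZdef
  have hmemRange : ∀ p : Finset X × Finset Y, p ∈ rangeSet E k l s δ ↔
      (p.1.card = k ∧ p.2.card = l ∧ inRange E s δ p.1 p.2) := by
    intro p; simp [rangeSet]
  have hZeq : Z = ∑ p ∈ rangeSet E k l s δ, Qem E r k l p.1 p.2 := by
    have hsub : rangeSet E k l s δ ⊆ Finset.univ ×ˢ Finset.univ := by
      intro p _
      rw [Finset.univ_product_univ]
      exact Finset.mem_univ p
    have hz : ∀ p ∈ Finset.univ ×ˢ Finset.univ, p ∉ rangeSet E k l s δ →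
        (if inRange E s δ (p : Finset X × Finset Y).1 p.2 then Qem E r k l p.1 p.2 else 0)
          = 0 := by
      intro p _ hp
      rw [hmemRange] at hp
      by_cases hin : inRange E s δ p.1 p.2
      · rw [if_pos hin, BirthdayAux.Qem_eq, if_neg (fun hc => hp ⟨hc.1, hc.2, hin⟩)]
      · rw [if_neg hin]
    rw [hZdef, ← Finset.sum_product', ← Finset.sum_subset hsub hz]
    exact Finset.sum_congr rfl fun p hp => if_pos ((hmemRange p).1 hp).2.2
  obtain ⟨S0, T0, hin0, hpos0⟩ := hsupp
  have hc00 : S0.card = k ∧ T0.card = l := by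
    by_contra hcc
    rw [BirthdayAux.Qem_eq, if_neg hcc] at hpos0
    exact lt_irrefl 0 hpos0
  have hmem0 : (S0, T0) ∈ rangeSet E k l s δ :=
    (hmemRange _).2 ⟨hc00.1, hc00.2, hin0⟩
  have hZpos : 0 < Z := by
    rw [hZeq]
    exact lt_of_lt_of_le hpos0
      (Finset.single_le_sum (fun p _ => BirthdayAux.Qem_nonneg E r k l p.1 p.2) hmem0)
  have hN : 0 < ((rangeSet E k l s δ).card : ℝ) := by
    exact_mod_cast Finset.card_pos.2 ⟨_, hmem0⟩
  have hZle : Z ≤ ((rangeSet E k l s δ).card : ℝ) * (c0 * ((1 + δ) * s) ^ r) := by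
    rw [hZeq]
    calc ∑ p ∈ rangeSet E k l s δ, Qem E r k l p.1 p.2
        ≤ ∑ _p ∈ rangeSet E k l s δ, c0 * ((1 + δ) * s) ^ r := by
          refine Finset.sum_le_sum fun p hp => ?_
          obtain ⟨h1, h2, h3⟩ := (hmemRange p).1 hp
          rw [BirthdayAux.Qem_eq, if_pos ⟨h1, h2⟩, ← hc0def]
          exact mul_le_mul_of_nonneg_left (hhigh _ _ h3) hc0.le
      _ = ((rangeSet E k l s δ).card : ℝ) * (c0 * ((1 + δ) * s) ^ r) := by
          rw [Finset.sum_const, nsmul_eq_mul]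
  have hkey : ((1 + δ) * s) ^ r = C' * ((1 - δ - 2*β) * s) ^ r := by
    rw [hC', ← mul_pow]
    congr 1
    field_simp
  have hcond : ∀ S' T', condOn (Qem E r k l) (inRange E s δ) S' T'
      = if inRange E s δ S' T' then Qem E r k l S' T' / Z else 0 := fun _ _ => rfl
  clear_value Z
  have hcondnn : ∀ S' T', 0 ≤ condOn (Qem E r k l) (inRange E s δ) S' T' := by
    intro S' T'
    rw [hcond]
    split
    · exact div_nonneg (BirthdayAux.Qem_nonneg E r k l S' T') hZpos.le
    · exact le_refl 0
  have hpoint : ∀ S' T',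
      (if (S', T') ∈ rangeSet E k l s δ then ((rangeSet E k l s δ).card : ℝ)⁻¹ else 0)
        ≤ C' * condOn (Qem E r k l) (inRange E s δ) S' T' := by
    intro S' T'
    by_cases hmem : (S', T') ∈ rangeSet E k l s δ
    · rw [if_pos hmem]
      obtain ⟨hk', hl', hin'⟩ := (hmemRange _).1 hmem
      rw [hcond, if_pos hin']
      have hQlow : c0 * ((1 - δ - 2*β) * s) ^ r ≤ Qem E r k l S' T' := by
        rw [BirthdayAux.Qem_eq, if_pos ⟨hk', hl'⟩, ← hc0def]
        exact mul_le_mul_of_nonneg_left (hlow S' T' hin') hc0.le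
      have hrw : C' * (Qem E r k l S' T' / Z) = (C' * Qem E r k l S' T') / Z :=
        (mul_div_assoc _ _ _).symm
      rw [hrw, le_div_iff₀ hZpos]
      calc ((rangeSet E k l s δ).card : ℝ)⁻¹ * Z
          ≤ ((rangeSet E k l s δ).card : ℝ)⁻¹ *
              (((rangeSet E k l s δ).card : ℝ) * (c0 * ((1 + δ) * s) ^ r)) :=
            mul_le_mul_of_nonneg_left hZle (inv_nonneg.2 hN.le)
        _ = c0 * ((1 + δ) * s) ^ r := by
            rw [← mul_assoc, inv_mul_cancel₀ hN.ne', one_mul]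
        _ = C' * (c0 * ((1 - δ - 2*β) * s) ^ r) := by
            rw [hkey]; ring
        _ ≤ C' * Qem E r k l S' T' :=
            mul_le_mul_of_nonneg_left hQlow hC'0
    · rw [if_neg hmem]
      exact mul_nonneg hC'0 (hcondnn S' T')
  have hmain : birthdayRangeVal E P k l s δ ≤ C' * birthdayEmCondVal E P r k l s δ := by
    rw [birthdayRangeVal, birthdayEmCondVal]
    exact BirthdayAux.gameVal_le_mul _ _ _ C' hC'0 hpoint
  have hvnn : 0 ≤ birthdayEmCondVal E P r k l s δ := by
    rw [birthdayEmCondVal]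
    exact BirthdayAux.gameVal_nonneg _ _ hcondnn
  refine le_trans hmain (mul_le_mul_of_nonneg_right ?_ hvnn)
  have hbase : 1 ≤ (1 + δ) / (1 - δ - 2 * β) := by
    rw [le_div_iff₀ hw]; linarith
  rw [hC']
  exact pow_le_pow_right₀ hbase (by omega)
end
end

section
/- Let X and Y be probability distributions over a finite set Θ with D_KL(X‖Y) ≤ κ (in particular D_KL(X‖Y) is finite), and let f : Θ → [0,1] be any function with E_{x∼X}[f(x)] = 1 − δ. Then E_{y∼Y}[f(y)] ≥ (δ^δ·e^{−κ})^{1/(1−δ)}·(1 − δ), where by convention 0^0 = 1 and the right-hand side is interpreted as 0 when δ = 1. -/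
open Finset

attribute [local instance] Classical.propDecidable

noncomputable section

/-- Kullback–Leibler divergence between two distributions on a finite set, with the usual
convention that terms with `X θ = 0` contribute `0`. -/
def klDiv {Θ : Type*} [Fintype Θ] (X Y : Θ → ℝ) : ℝ :=
  ∑ θ : Θ, if X θ ≠ 0 then X θ * Real.log (X θ / Y θ) else 0

lemma log_sum_ineq {Θ : Type*} [Fintype Θ] (a b : Θ → ℝ) (ha : ∀ θ, 0 ≤ a θ)
    (hb : ∀ θ, 0 ≤ b θ) (hab : ∀ θ, b θ = 0 → a θ = 0) :
    (∑ θ, a θ) * Real.log ((∑ θ, a θ) / (∑ θ, b θ)) ≤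
      ∑ θ, (if a θ ≠ 0 then a θ * Real.log (a θ / b θ) else 0) := by
  classical
  by_cases hA : ∀ θ, a θ = 0
  · simp [hA]
  push_neg at hA
  obtain ⟨θ0, hθ0⟩ := hA
  have hbθ0 : 0 < b θ0 := (hb θ0).lt_of_ne fun h => hθ0 (hab θ0 h.symm)
  have hS : 0 < ∑ θ, b θ := Finset.sum_pos' (fun θ _ => hb θ) ⟨θ0, Finset.mem_univ θ0, hbθ0⟩
  set S := ∑ θ, b θ with hSdef
  have key := Real.convexOn_mul_log.map_sum_le (t := Finset.univ)
    (w := fun θ => b θ / S) (p := fun θ => a θ / b θ)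
    (fun θ _ => div_nonneg (hb θ) hS.le)
    (by rw [← Finset.sum_div, div_self hS.ne'])
    (fun θ _ => Set.mem_Ici.2 (div_nonneg (ha θ) (hb θ)))
  have hsum : ∑ θ, (b θ / S) • (a θ / b θ) = (∑ θ, a θ) / S := by
    rw [Finset.sum_div]
    refine Finset.sum_congr rfl fun θ _ => ?_
    by_cases h : b θ = 0
    · simp [h, hab θ h]
    · rw [smul_eq_mul]
      field_simp
  rw [hsum] at key
  have hrhs : ∀ θ ∈ Finset.univ, (b θ / S) • ((a θ / b θ) * Real.log (a θ / b θ))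
      = (if a θ ≠ 0 then a θ * Real.log (a θ / b θ) else 0) / S := by
    intro θ _
    by_cases h0 : a θ = 0
    · simp [h0]
    · have hbθ : b θ ≠ 0 := fun h => h0 (hab θ h)
      simp only [ne_eq, h0, not_false_iff, if_true, smul_eq_mul]
      field_simp
  rw [Finset.sum_congr rfl hrhs, ← Finset.sum_div] at key
  have := mul_le_mul_of_nonneg_right key hS.le
  rw [div_mul_cancel₀ _ hS.ne'] at this
  calc (∑ θ, a θ) * Real.log ((∑ θ, a θ) / S)
      = (∑ θ, a θ) / S * Real.log ((∑ θ, a θ) / S) * S := by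
        field_simp
    _ ≤ _ := this

/-- **Rounding bound from KL divergence.**  If `X`, `Y` are distributions on a finite set
`Θ` with `D_KL(X‖Y) ≤ κ` (in particular the divergence is finite, i.e.
`supp X ⊆ supp Y`) and `f : Θ → [0,1]` satisfies `E_{x∼X}[f] = 1 − δ`, then
`E_{y∼Y}[f] ≥ (δ^δ·e^{−κ})^{1/(1−δ)}·(1 − δ)`.  Here both powers are real powers, so that
`0^0 = 1` and the right-hand side degenerates to `0` when `δ = 1`. -/
theorem exp_ge_of_klDiv_le {Θ : Type*} [Fintype Θ] (X Y : Θ → ℝ)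
    (hX0 : ∀ θ, 0 ≤ X θ) (hX1 : ∑ θ : Θ, X θ = 1)
    (hY0 : ∀ θ, 0 ≤ Y θ) (hY1 : ∑ θ : Θ, Y θ = 1)
    (hsupp : ∀ θ, X θ ≠ 0 → Y θ ≠ 0)
    (κ : ℝ) (hκ : klDiv X Y ≤ κ)
    (f : Θ → ℝ) (hf0 : ∀ θ, 0 ≤ f θ) (hf1 : ∀ θ, f θ ≤ 1)
    (δ : ℝ) (hδ : ∑ θ : Θ, X θ * f θ = 1 - δ) :
    (δ ^ δ * Real.exp (-κ)) ^ ((1 : ℝ) / (1 - δ)) * (1 - δ) ≤ ∑ θ : Θ, Y θ * f θ := by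
  classical
  set B := ∑ θ : Θ, Y θ * f θ with hBdef
  have hB0 : 0 ≤ B := Finset.sum_nonneg fun θ _ => mul_nonneg (hY0 θ) (hf0 θ)
  have hB1 : B ≤ 1 := by
    rw [hBdef, ← hY1]
    exact Finset.sum_le_sum fun θ _ => mul_le_of_le_one_right (hY0 θ) (hf1 θ)
  have hA0 : (0:ℝ) ≤ 1 - δ := by
    rw [← hδ]; exact Finset.sum_nonneg fun θ _ => mul_nonneg (hX0 θ) (hf0 θ)
  have hδ0 : 0 ≤ δ := by
    have : ∑ θ : Θ, X θ * f θ ≤ 1 := by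
      rw [← hX1]
      exact Finset.sum_le_sum fun θ _ => mul_le_of_le_one_right (hX0 θ) (hf1 θ)
    rw [hδ] at this; linarith
  rcases eq_or_lt_of_le hA0 with hA | hA
  · rw [← hA]; simpa using hB0
  -- now 0 < 1 - δ
  have hδ1 : δ < 1 := by linarith
  -- B > 0
  have hBpos : 0 < B := by
    have hex : ∃ θ, X θ * f θ ≠ 0 := by
      by_contra h
      push_neg at h
      rw [Finset.sum_congr rfl fun θ _ => h θ] at hδ
      simp at hδ; linarith
    obtain ⟨θ1, hθ1⟩ := hex
    have hx1 : X θ1 ≠ 0 := fun h => hθ1 (by simp [h])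
    have hfpos : 0 < f θ1 := (hf0 θ1).lt_of_ne fun h => hθ1 (by simp [← h])
    have hy1 : 0 < Y θ1 := (hY0 θ1).lt_of_ne (Ne.symm (hsupp θ1 hx1))
    calc (0:ℝ) < Y θ1 * f θ1 := mul_pos hy1 hfpos
      _ ≤ B := Finset.single_le_sum (fun θ _ => mul_nonneg (hY0 θ) (hf0 θ)) (Finset.mem_univ θ1)
  -- log-sum on (X f, Y f)
  have ineq1 := log_sum_ineq (fun θ => X θ * f θ) (fun θ => Y θ * f θ)
    (fun θ => mul_nonneg (hX0 θ) (hf0 θ)) (fun θ => mul_nonneg (hY0 θ) (hf0 θ))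
    (fun θ h => by
      rcases mul_eq_zero.1 h with h | h
      · rw [not_not.1 (not_imp_not.2 (hsupp θ) (not_not_intro h)), zero_mul]
      · rw [h, mul_zero])
  rw [hδ] at ineq1
  -- log-sum on (X (1-f), Y (1-f))
  have ineq2 := log_sum_ineq (fun θ => X θ * (1 - f θ)) (fun θ => Y θ * (1 - f θ))
    (fun θ => mul_nonneg (hX0 θ) (by linarith [hf1 θ])) (fun θ => mul_nonneg (hY0 θ) (by linarith [hf1 θ]))
    (fun θ h => by
      rcases mul_eq_zero.1 h with h | h
      · rw [not_not.1 (not_imp_not.2 (hsupp θ) (not_not_intro h)), zero_mul]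
      · rw [h, mul_zero])
  have hsx : ∑ θ : Θ, X θ * (1 - f θ) = δ := by
    simp only [mul_sub, mul_one]
    rw [Finset.sum_sub_distrib, hX1, hδ]; ring
  have hsy : ∑ θ : Θ, Y θ * (1 - f θ) = 1 - B := by
    simp only [mul_sub, mul_one]
    rw [Finset.sum_sub_distrib, hY1]
  rw [hsx, hsy] at ineq2
  -- combine the two sums into klDiv
  have hcomb : (∑ θ : Θ, (if X θ * f θ ≠ 0 then X θ * f θ * Real.log (X θ * f θ / (Y θ * f θ)) else 0))
      + (∑ θ : Θ, (if X θ * (1 - f θ) ≠ 0 then X θ * (1 - f θ) * Real.log (X θ * (1 - f θ) / (Y θ * (1 - f θ))) else 0))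
      = klDiv X Y := by
    rw [klDiv, ← Finset.sum_add_distrib]
    refine Finset.sum_congr rfl fun θ _ => ?_
    by_cases hx : X θ = 0
    · simp [hx]
    have hy : Y θ ≠ 0 := hsupp θ hx
    by_cases hf : f θ = 0
    · simp [hf, hx]
    by_cases hg : f θ = 1
    · simp [hg, hx]
    have hg' : (1:ℝ) - f θ ≠ 0 := fun h => hg (by linarith [sub_eq_zero.1 h])
    rw [if_pos (mul_ne_zero hx hf), if_pos (mul_ne_zero hx hg'), if_pos hx,
      mul_div_mul_right _ _ hf, mul_div_mul_right _ _ hg']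
    ring
  have hmain : (1 - δ) * Real.log ((1 - δ) / B) + δ * Real.log (δ / (1 - B)) ≤ κ := by
    calc _ ≤ klDiv X Y := by rw [← hcomb]; exact add_le_add ineq1 ineq2
      _ ≤ κ := hκ
  -- δ * log δ ≤ δ * log (δ / (1 - B))
  have hstep : δ * Real.log δ ≤ δ * Real.log (δ / (1 - B)) := by
    rcases eq_or_lt_of_le hδ0 with h0 | h0
    · simp [← h0]
    apply mul_le_mul_of_nonneg_left _ hδ0
    rcases eq_or_lt_of_le (sub_nonneg.2 hB1) with h1 | h1
    · rw [← h1, div_zero, Real.log_zero]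
      exact Real.log_nonpos hδ0 hδ1.le
    · rw [Real.log_div h0.ne' h1.ne']
      have : Real.log (1 - B) ≤ 0 := Real.log_nonpos h1.le (by linarith)
      linarith
  have hkey : (1 - δ) * (Real.log (1 - δ) - Real.log B) ≤ κ - δ * Real.log δ := by
    have := Real.log_div hA.ne' hBpos.ne'
    nlinarith [hmain, hstep]
  -- convert goal
  have hpow : (δ ^ δ * Real.exp (-κ)) ^ ((1:ℝ) / (1 - δ))
      = Real.exp ((δ * Real.log δ - κ) * (1 / (1 - δ))) := by
    have hdd : δ ^ δ = Real.exp (δ * Real.log δ) := by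
      rcases eq_or_lt_of_le hδ0 with h0 | h0
      · rw [← h0]; simp
      · rw [Real.rpow_def_of_pos h0]; ring_nf
    rw [hdd, ← Real.exp_add, Real.rpow_def_of_pos (Real.exp_pos _), Real.log_exp]
    ring_nf
  rw [hpow]
  have hlog : (δ * Real.log δ - κ) * (1 / (1 - δ)) + Real.log (1 - δ) ≤ Real.log B := by
    rw [mul_one_div, div_add' _ _ _ hA.ne', div_le_iff₀ hA]
    nlinarith [hkey]
  calc Real.exp ((δ * Real.log δ - κ) * (1 / (1 - δ))) * (1 - δ)
      = Real.exp ((δ * Real.log δ - κ) * (1 / (1 - δ)) + Real.log (1 - δ)) := by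
        rw [Real.exp_add, Real.exp_log hA]
    _ ≤ Real.exp (Real.log B) := Real.exp_le_exp.2 hlog
    _ = B := Real.exp_log hBpos
end
end

section
/- Let U be a finite set and let a, b be non-negative integers with a·b ≤ |U|. If U_1, …, U_a are sampled independently and uniformly at random from the b-element subsets of U, then Pr[ |U_1 ∪ ⋯ ∪ U_a| ≤ a·b/10 ] ≤ exp(−a·b/2). -/
open Finset

attribute [local instance] Classical.propDecidable

noncomputable section

private lemma descFact_mul_pow_le (b : ℕ) : ∀ {m n : ℕ}, m ≤ n →
    m.descFactorial b * n ^ b ≤ n.descFactorial b * m ^ b := by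
  induction b with
  | zero => simp
  | succ b ih =>
    intro m n hmn
    rw [Nat.descFactorial_succ, Nat.descFactorial_succ, pow_succ, pow_succ]
    have h1 : (m - b) * n ≤ (n - b) * m := by
      rw [Nat.sub_mul, Nat.sub_mul]
      calc m * n - b * n ≤ m * n - b * m :=
            Nat.sub_le_sub_left (Nat.mul_le_mul_left b hmn) (m * n)
        _ = n * m - b * m := by rw [mul_comm m n]
    calc (m - b) * m.descFactorial b * (n ^ b * n)
        = ((m - b) * n) * (m.descFactorial b * n ^ b) := by ring
      _ ≤ ((n - b) * m) * (n.descFactorial b * m ^ b) := Nat.mul_le_mul h1 (ih hmn)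
      _ = (n - b) * n.descFactorial b * (m ^ b * m) := by ring

private lemma count_le {U : Type*} [Fintype U] (a b m : ℕ) (hm : m ≤ Fintype.card U) :
    (Finset.univ.filter fun f : Fin a → Finset U =>
        (∀ i, (f i).card = b) ∧ (Finset.univ.biUnion f).card ≤ m).card ≤
      (Fintype.card U).choose m * (m.choose b) ^ a := by
  classical
  have hsub : (Finset.univ.filter fun f : Fin a → Finset U =>
      (∀ i, (f i).card = b) ∧ (Finset.univ.biUnion f).card ≤ m) ⊆
      (Finset.univ.powersetCard m).biUnion
        (fun S => Fintype.piFinset fun _ : Fin a => S.powersetCard b) := by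
    intro f hf
    simp only [mem_filter, mem_univ, true_and] at hf
    obtain ⟨h1, h2⟩ := hf
    obtain ⟨S, hS, hScard⟩ := Finset.exists_superset_card_eq h2 hm
    refine mem_biUnion.2 ⟨S, Finset.mem_powersetCard.2 ⟨Finset.subset_univ S, hScard⟩, ?_⟩
    refine Fintype.mem_piFinset.2 fun i => Finset.mem_powersetCard.2
      ⟨(Finset.subset_biUnion_of_mem f (mem_univ i)).trans hS, h1 i⟩
  refine (Finset.card_le_card hsub).trans ((Finset.card_biUnion_le).trans ?_)
  refine le_trans (Finset.sum_le_sum (g := fun _ => (m.choose b) ^ a) ?_) ?_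
  · intro S hS
    rw [Fintype.card_piFinset]
    have hSm : S.card = m := (Finset.mem_powersetCard.1 hS).2
    simp [Finset.card_powersetCard, hSm]
  · rw [Finset.sum_const, smul_eq_mul, Finset.card_powersetCard, Finset.card_univ]

private lemma pow_self_le_exp_mul_factorial (m : ℕ) :
    (m : ℝ) ^ m ≤ Real.exp m * m.factorial := by
  have h0 : (0:ℝ) ≤ (m:ℝ) := Nat.cast_nonneg m
  have hterm : (m:ℝ) ^ m / m.factorial ≤ Real.exp m := by
    refine le_trans ?_ (Real.sum_le_exp_of_nonneg h0 (m+1))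
    refine Finset.single_le_sum (f := fun i => (m:ℝ) ^ i / i.factorial) ?_ ?_
    · intro i _
      positivity
    · exact Finset.mem_range.2 (Nat.lt_succ_self m)
  have hfac : (0:ℝ) < m.factorial := by positivity
  calc (m:ℝ) ^ m = ((m:ℝ) ^ m / m.factorial) * m.factorial := by field_simp
    _ ≤ Real.exp m * m.factorial := mul_le_mul_of_nonneg_right hterm hfac.le

/-- **Union of random subsets is large.**  Let `U` be a finite set and `a, b` non-negative
integers with `a·b ≤ |U|`.  If `U₁, …, U_a` are sampled independently and uniformly among
the `b`-element subsets of `U`, then the probability that `|U₁ ∪ ⋯ ∪ U_a| ≤ a·b/10` is at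
most `exp(−a·b/2)`.  The probability is expressed by counting: the number of `a`-tuples of
`b`-element subsets with small union, divided by the total number `C(|U|, b)^a` of
`a`-tuples of `b`-element subsets. -/
theorem union_of_random_subsets_large {U : Type*} [Fintype U] (a b : ℕ)
    (hab : a * b ≤ Fintype.card U) :
    ((Finset.univ.filter fun f : Fin a → Finset U =>
          (∀ i, (f i).card = b) ∧
            ((Finset.univ.biUnion f).card : ℝ) ≤ (a : ℝ) * (b : ℝ) / 10).card : ℝ) /
        (((Fintype.card U).choose b : ℝ) ^ a) ≤
      Real.exp (-((a : ℝ) * (b : ℝ)) / 2) := by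
  classical
  set n := Fintype.card U with hn
  -- rewrite the real-valued condition as a natural-number condition
  have hcond : ∀ f : Fin a → Finset U,
      (((Finset.univ.biUnion f).card : ℝ) ≤ (a : ℝ) * (b : ℝ) / 10) ↔
        (Finset.univ.biUnion f).card ≤ a * b / 10 := by
    intro f
    rw [le_div_iff₀ (by norm_num : (0:ℝ) < 10), Nat.le_div_iff_mul_le (by norm_num : 0 < 10)]
    exact_mod_cast Iff.rfl
  have hfilter : (Finset.univ.filter fun f : Fin a → Finset U =>
      (∀ i, (f i).card = b) ∧
        ((Finset.univ.biUnion f).card : ℝ) ≤ (a : ℝ) * (b : ℝ) / 10) =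
      (Finset.univ.filter fun f : Fin a → Finset U =>
      (∀ i, (f i).card = b) ∧ (Finset.univ.biUnion f).card ≤ a * b / 10) :=
    Finset.filter_congr (fun f _ => by rw [hcond f])
  rw [hfilter]
  set m := a * b / 10 with hmdef
  have h10m : 10 * m ≤ a * b := by
    rw [mul_comm]
    exact Nat.div_mul_le_self (a*b) 10
  have hmab : m ≤ a * b := le_trans (by omega) h10m
  have hmn : m ≤ n := hmab.trans hab
  -- the counting bound
  have hcount := count_le (U := U) a b m hmn
  -- positivity of the denominator
  have hD : (0:ℝ) < ((n.choose b : ℝ)) ^ a := by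
    rcases Nat.eq_zero_or_pos a with ha | ha
    · rw [ha, pow_zero]; norm_num
    · have hbn : b ≤ n := le_trans (Nat.le_mul_of_pos_left b ha) hab
      have := Nat.choose_pos hbn
      positivity
  rw [div_le_iff₀ hD]
  have hcount' : ((Finset.univ.filter fun f : Fin a → Finset U =>
      (∀ i, (f i).card = b) ∧ (Finset.univ.biUnion f).card ≤ m).card : ℝ) ≤
      (n.choose m : ℝ) * ((m.choose b : ℝ)) ^ a := by exact_mod_cast hcount
  refine hcount'.trans ?_
  -- now the analytic estimate
  set N : ℝ := (n : ℝ) with hN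
  set M : ℝ := (m : ℝ) with hM
  set AB : ℝ := (a : ℝ) * (b : ℝ) with hAB
  have hM0 : (0:ℝ) ≤ M := by rw [hM]; positivity
  have hN0 : (0:ℝ) ≤ N := by rw [hN]; positivity
  have hAB0 : (0:ℝ) ≤ AB := by rw [hAB]; positivity
  have hABcast : ((a * b : ℕ) : ℝ) = AB := by rw [hAB]; push_cast; ring
  have hMN : M ≤ N := by rw [hM, hN]; exact_mod_cast hmn
  have h10M : 10 * M ≤ AB := by
    rw [hM, ← hABcast]; exact_mod_cast h10m
  have hABN : AB ≤ N := by rw [hN, ← hABcast]; exact_mod_cast hab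
  set k := a * b - m with hk
  have hkm : m + k = a * b := by rw [hk]; exact Nat.add_sub_cancel' hmab
  have hKcast : M + (k : ℝ) = AB := by rw [hM, ← hABcast]; exact_mod_cast hkm
  -- F1 : C(m,b) * n^b ≤ C(n,b) * m^b  (naturals)
  have F1nat : m.choose b * n ^ b ≤ n.choose b * m ^ b := by
    have h := descFact_mul_pow_le b hmn
    rw [Nat.descFactorial_eq_factorial_mul_choose, Nat.descFactorial_eq_factorial_mul_choose] at h
    have h' : b.factorial * (m.choose b * n ^ b) ≤ b.factorial * (n.choose b * m ^ b) := by
      calc b.factorial * (m.choose b * n ^ b) = b.factorial * m.choose b * n ^ b := by ring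
        _ ≤ b.factorial * n.choose b * m ^ b := h
        _ = b.factorial * (n.choose b * m ^ b) := by ring
    exact Nat.le_of_mul_le_mul_left h' b.factorial_pos
  have F1a : ((m.choose b : ℝ)) ^ a * N ^ (a * b) ≤ ((n.choose b : ℝ)) ^ a * M ^ (a * b) := by
    have h1 : ((m.choose b : ℝ)) * N ^ b ≤ ((n.choose b : ℝ)) * M ^ b := by
      rw [hN, hM]; exact_mod_cast F1nat
    have h2 := pow_le_pow_left₀ (mul_nonneg (Nat.cast_nonneg _) (pow_nonneg hN0 b)) h1 a
    rw [mul_pow, mul_pow, ← pow_mul, ← pow_mul, mul_comm b a] at h2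
    exact h2
  -- F4 : C(n,m) * M^m ≤ exp M * N^m
  have F4 : ((n.choose m : ℝ)) * M ^ m ≤ Real.exp M * N ^ m := by
    have F2 : (m.factorial : ℝ) * (n.choose m : ℝ) ≤ N ^ m := by
      have h := Nat.descFactorial_le_pow n m
      rw [Nat.descFactorial_eq_factorial_mul_choose] at h
      rw [hN]; exact_mod_cast h
    have F3 : M ^ m ≤ Real.exp M * m.factorial := by
      rw [hM]; exact pow_self_le_exp_mul_factorial m
    calc ((n.choose m : ℝ)) * M ^ m ≤ ((n.choose m : ℝ)) * (Real.exp M * m.factorial) :=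
          mul_le_mul_of_nonneg_left F3 (Nat.cast_nonneg _)
      _ = Real.exp M * ((m.factorial : ℝ) * (n.choose m : ℝ)) := by ring
      _ ≤ Real.exp M * N ^ m := mul_le_mul_of_nonneg_left F2 (Real.exp_pos _).le
  -- F5 : exp M * M^k ≤ exp(-AB/2) * N^k
  have hexp2 : Real.exp 2 ≤ 10 := by
    have h := Real.exp_one_lt_d9
    have h2 : Real.exp 2 = Real.exp 1 * Real.exp 1 := by
      rw [← Real.exp_add]; norm_num
    nlinarith [Real.exp_pos 1]
  have F5 : Real.exp M * M ^ k ≤ Real.exp (-AB / 2) * N ^ k := by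
    have hMe : Real.exp 2 * M ≤ N := by
      have h := mul_le_mul_of_nonneg_right hexp2 hM0
      linarith
    have hpow : (Real.exp 2 * M) ^ k ≤ N ^ k :=
      pow_le_pow_left₀ (mul_nonneg (Real.exp_pos 2).le hM0) hMe k
    have hexpk : Real.exp 2 ^ k = Real.exp ((k : ℝ) * 2) := (Real.exp_nat_mul 2 k).symm
    have hexple : Real.exp M ≤ Real.exp (-AB / 2) * Real.exp ((k : ℝ) * 2) := by
      rw [← Real.exp_add, Real.exp_le_exp]
      linarith [hKcast, h10M, hM0, hAB0]
    calc Real.exp M * M ^ k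
        = (Real.exp M / Real.exp 2 ^ k) * (Real.exp 2 * M) ^ k := by
          rw [mul_pow]; field_simp
      _ ≤ (Real.exp M / Real.exp 2 ^ k) * N ^ k :=
          mul_le_mul_of_nonneg_left hpow (by positivity)
      _ ≤ Real.exp (-AB / 2) * N ^ k := by
          refine mul_le_mul_of_nonneg_right ?_ (pow_nonneg hN0 k)
          rw [div_le_iff₀ (by positivity), hexpk]
          exact hexple
  -- assemble
  have hP : (0:ℝ) < N ^ (a * b) * M ^ m := by
    rcases Nat.eq_zero_or_pos (a * b) with h | h
    · have hm0 : m = 0 := by simp [hmdef, h]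
      rw [h, hm0, pow_zero, pow_zero]; norm_num
    · have hNpos : (0:ℝ) < N := by
        rw [hN]; exact_mod_cast lt_of_lt_of_le h hab
      rcases Nat.eq_zero_or_pos m with hm0 | hm0
      · rw [hm0, pow_zero, mul_one]; positivity
      · have hMpos : (0:ℝ) < M := by rw [hM]; exact_mod_cast hm0
        positivity
  rw [← mul_le_mul_iff_of_pos_right hP]
  calc ((n.choose m : ℝ)) * ((m.choose b : ℝ)) ^ a * (N ^ (a*b) * M ^ m)
      = (((m.choose b : ℝ)) ^ a * N ^ (a*b)) * (((n.choose m : ℝ)) * M ^ m) := by ring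
    _ ≤ (((n.choose b : ℝ)) ^ a * M ^ (a*b)) * (Real.exp M * N ^ m) := by
        refine mul_le_mul F1a F4
          (mul_nonneg (Nat.cast_nonneg _) (pow_nonneg hM0 m))
          (mul_nonneg (pow_nonneg (Nat.cast_nonneg _) a) (pow_nonneg hM0 (a*b)))
    _ = (Real.exp M * M ^ k) * (((n.choose b : ℝ)) ^ a * M ^ m * N ^ m) := by
        rw [← hkm, pow_add]; ring
    _ ≤ (Real.exp (-AB / 2) * N ^ k) * (((n.choose b : ℝ)) ^ a * M ^ m * N ^ m) := by
        refine mul_le_mul_of_nonneg_right F5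
          (mul_nonneg (mul_nonneg (pow_nonneg (Nat.cast_nonneg _) a) (pow_nonneg hM0 m))
            (pow_nonneg hN0 m))
    _ = Real.exp (-AB / 2) * ((n.choose b : ℝ)) ^ a * ((N ^ m * N ^ k) * M ^ m) := by ring
    _ = Real.exp (-AB / 2) * ((n.choose b : ℝ)) ^ a * (N ^ (a*b) * M ^ m) := by
        rw [← pow_add, hkm]
end
end

section
/- Let (X, Y, E) be a bipartite graph in which every vertex has degree at most d_max. For non-negative integers k ≤ |X| and l ≤ |Y|, let s = k·l·|E|/(|X|·|Y|). Then for any non-negative real γ < 1/2, if S is a uniformly random k-element subset of X and T is an independent uniformly random l-element subset of Y, Pr[ |E(S, T)| ∉ [(1−γ)·s, (1+γ)·s] ] ≤ 4·exp(−γ^2·s/(54·d_max)). -/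
open Finset

attribute [local instance] Classical.propDecidable

noncomputable section

namespace EdgeConc
variable {α : Type*} (f : α → ℝ)

def esym (s : Finset α) (m : ℕ) : ℝ := ∑ R ∈ s.powersetCard m, ∏ a ∈ R, f a

lemma esym_erase {s : Finset α} {i : α} (hi : i ∈ s) (m : ℕ) :
    esym f s (m + 1) = esym f (s.erase i) (m + 1) + f i * esym f (s.erase i) m := by
  classical
  conv_lhs => rw [← Finset.insert_erase hi]
  rw [esym, Finset.powersetCard_succ_insert (Finset.notMem_erase i s)]
  rw [Finset.sum_union, Finset.sum_image]
  · congr 1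
    rw [esym, Finset.mul_sum]
    refine Finset.sum_congr rfl fun R hR => ?_
    have hiR : i ∉ R := fun h => (Finset.notMem_erase i s)
      ((Finset.mem_powersetCard.1 hR).1 h)
    rw [Finset.prod_insert hiR]
  · intro R hR R' hR' h
    have hiR : i ∉ R := fun hh => (Finset.notMem_erase i s)
      ((Finset.mem_powersetCard.1 hR).1 hh)
    have hiR' : i ∉ R' := fun hh => (Finset.notMem_erase i s)
      ((Finset.mem_powersetCard.1 hR').1 hh)
    have := congrArg (Finset.erase · i) h
    simpa [Finset.erase_insert hiR, Finset.erase_insert hiR'] using this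
  · rw [Finset.disjoint_left]
    intro R hR hR'
    have hiR : i ∉ R := fun hh => (Finset.notMem_erase i s)
      ((Finset.mem_powersetCard.1 hR).1 hh)
    obtain ⟨R', _, rfl⟩ := Finset.mem_image.1 hR'
    exact hiR (Finset.mem_insert_self i R')

lemma sum_mul_esym_erase (s : Finset α) (m : ℕ) :
    ∑ i ∈ s, f i * esym f (s.erase i) m = ((m : ℝ) + 1) * esym f s (m + 1) := by
  classical
  have lhs_eq : ∑ i ∈ s, f i * esym f (s.erase i) m
      = ∑ x ∈ s.sigma (fun i => (s.erase i).powersetCard m), f x.1 * ∏ a ∈ x.2, f a := by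
    rw [Finset.sum_sigma]
    refine Finset.sum_congr rfl fun i _ => ?_
    rw [esym, Finset.mul_sum]
  have rhs_eq : ((m : ℝ) + 1) * esym f s (m + 1)
      = ∑ y ∈ (s.powersetCard (m + 1)).sigma (fun R => R), ∏ a ∈ y.1, f a := by
    rw [Finset.sum_sigma, esym, Finset.mul_sum]
    refine Finset.sum_congr rfl fun R hR => ?_
    simp only []
    rw [Finset.sum_const, nsmul_eq_mul, (Finset.mem_powersetCard.1 hR).2]
    push_cast
    ring
  rw [lhs_eq, rhs_eq]
  refine Finset.sum_bij' (fun x _ => (⟨insert x.1 x.2, x.1⟩ : Σ _ : Finset α, α))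
    (fun y _ => (⟨y.2, y.1.erase y.2⟩ : Σ _ : α, Finset α)) ?_ ?_ ?_ ?_ ?_
  · rintro ⟨i, R⟩ hx
    obtain ⟨hi, hR⟩ := Finset.mem_sigma.1 hx
    obtain ⟨hRsub, hRcard⟩ := Finset.mem_powersetCard.1 hR
    have hiR : i ∉ R := fun h => Finset.notMem_erase i s (hRsub h)
    refine Finset.mem_sigma.2 ⟨Finset.mem_powersetCard.2 ⟨?_, ?_⟩, Finset.mem_insert_self i R⟩
    · exact Finset.insert_subset hi (hRsub.trans (Finset.erase_subset i s))
    · rw [Finset.card_insert_of_notMem hiR, hRcard]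
  · rintro ⟨R, i⟩ hy
    obtain ⟨hR, hi⟩ := Finset.mem_sigma.1 hy
    obtain ⟨hRsub, hRcard⟩ := Finset.mem_powersetCard.1 hR
    refine Finset.mem_sigma.2 ⟨hRsub hi, Finset.mem_powersetCard.2 ⟨?_, ?_⟩⟩
    · intro a ha
      exact Finset.mem_erase.2 ⟨(Finset.mem_erase.1 ha).1, hRsub (Finset.mem_of_mem_erase ha)⟩
    · rw [Finset.card_erase_of_mem hi, hRcard]
      omega
  · rintro ⟨i, R⟩ hx
    obtain ⟨hi, hR⟩ := Finset.mem_sigma.1 hx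
    have hiR : i ∉ R := fun h =>
      Finset.notMem_erase i s ((Finset.mem_powersetCard.1 hR).1 h)
    simp [Finset.erase_insert hiR]
  · rintro ⟨R, i⟩ hy
    obtain ⟨hR, hi⟩ := Finset.mem_sigma.1 hy
    simp [Finset.insert_erase hi]
  · rintro ⟨i, R⟩ hx
    obtain ⟨hi, hR⟩ := Finset.mem_sigma.1 hx
    have hiR : i ∉ R := fun h =>
      Finset.notMem_erase i s ((Finset.mem_powersetCard.1 hR).1 h)
    exact (Finset.prod_insert hiR).symm

lemma esym_nonneg {s : Finset α} (hf : ∀ a ∈ s, 0 ≤ f a) (m : ℕ) : 0 ≤ esym f s m :=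
  Finset.sum_nonneg fun R hR => Finset.prod_nonneg fun a ha =>
    hf a ((Finset.mem_powersetCard.1 hR).1 ha)

lemma esym_zero (s : Finset α) : esym f s 0 = 1 := by simp [esym]

lemma esym_one (s : Finset α) : esym f s 1 = ∑ a ∈ s, f a := by
  simp [esym, Finset.powersetCard_one, Finset.sum_map]

lemma esym_of_lt {s : Finset α} {m : ℕ} (h : s.card < m) : esym f s m = 0 := by
  rw [esym, Finset.powersetCard_eq_empty.2 h, Finset.sum_empty]

lemma pair_diff {s : Finset α} {i j : α} (hi : i ∈ s) (hj : j ∈ s.erase i) (m : ℕ) :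
    f i * esym f (s.erase i) m - f j * esym f (s.erase j) m
      = (f i - f j) * esym f ((s.erase i).erase j) m := by
  obtain ⟨hji, hjs⟩ := Finset.mem_erase.1 hj
  cases m with
  | zero => simp [esym_zero]
  | succ m =>
    have h1 := esym_erase f hj m
    have h2 := esym_erase f (Finset.mem_erase.2 ⟨fun h => hji h.symm, hi⟩ : i ∈ s.erase j) m
    rw [Finset.erase_right_comm] at h2
    rw [h1, h2]
    ring

lemma cheb {s : Finset α} (hf : ∀ a ∈ s, 0 ≤ f a) (m : ℕ) :
    (∑ i ∈ s, f i) * ∑ i ∈ s, f i * esym f (s.erase i) m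
      ≤ (s.card : ℝ) * ∑ i ∈ s, f i * (f i * esym f (s.erase i) m) := by
  classical
  set g : α → ℝ := fun i => f i * esym f (s.erase i) m with hg
  have key : ∀ i ∈ s, ∀ j ∈ s, 0 ≤ (f i - f j) * (g i - g j) := by
    intro i hi j hj
    rcases eq_or_ne j i with rfl | hne
    · simp
    · have hj' : j ∈ s.erase i := Finset.mem_erase.2 ⟨hne, hj⟩
      have : g i - g j = (f i - f j) * esym f ((s.erase i).erase j) m :=
        pair_diff f hi hj' m
      rw [this, ← mul_assoc, ← sq]
      refine mul_nonneg (sq_nonneg _) (esym_nonneg f ?_ m)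
      intro a ha
      exact hf a (Finset.mem_of_mem_erase (Finset.mem_of_mem_erase ha))
  have h0 : 0 ≤ ∑ i ∈ s, ∑ j ∈ s, (f i - f j) * (g i - g j) :=
    Finset.sum_nonneg fun i hi => Finset.sum_nonneg fun j hj => key i hi j hj
  have expand : ∑ i ∈ s, ∑ j ∈ s, (f i - f j) * (g i - g j)
      = 2 * ((s.card : ℝ) * (∑ i ∈ s, f i * g i) - (∑ i ∈ s, f i) * (∑ i ∈ s, g i)) := by
    have hterm : ∀ i j : α, (f i - f j) * (g i - g j)
        = (f i * g i + f j * g j) - (f i * g j + f j * g i) := fun i j => by ring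
    simp_rw [hterm, Finset.sum_sub_distrib, Finset.sum_add_distrib, Finset.sum_const,
      nsmul_eq_mul, ← Finset.mul_sum, ← Finset.sum_mul]
    rw [← Finset.mul_sum]
    ring
  rw [expand] at h0
  linarith

lemma esym_rec {s : Finset α} (hf : ∀ a ∈ s, 0 ≤ f a) (m : ℕ) :
    (s.card : ℝ) * (((m : ℝ) + 2) * esym f s (m + 2))
      ≤ ((s.card : ℝ) - ((m : ℝ) + 1)) * (∑ a ∈ s, f a) * esym f s (m + 1) := by
  classical
  have hI1 : ∑ i ∈ s, f i * esym f (s.erase i) (m + 1) = ((m : ℝ) + 2) * esym f s (m + 2) := by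
    have := sum_mul_esym_erase f s (m + 1)
    push_cast at this ⊢
    linarith [this]
  have hI2 : ∑ i ∈ s, f i * esym f (s.erase i) (m + 1)
      = (∑ a ∈ s, f a) * esym f s (m + 1) - ∑ i ∈ s, f i * (f i * esym f (s.erase i) m) := by
    rw [Finset.sum_mul, ← Finset.sum_sub_distrib]
    refine Finset.sum_congr rfl fun i hi => ?_
    rw [esym_erase f hi m]
    ring
  have hch := cheb f hf m
  have hI1' := sum_mul_esym_erase f s m
  rw [hI2] at hI1
  have hch2 : (∑ a ∈ s, f a) * (((m : ℝ) + 1) * esym f s (m + 1))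
      ≤ (s.card : ℝ) * ∑ i ∈ s, f i * (f i * esym f (s.erase i) m) := by
    rw [← hI1']; exact hch
  have h3 : (s.card : ℝ) * (((m : ℝ) + 2) * esym f s (m + 2))
      = (s.card : ℝ) * ((∑ a ∈ s, f a) * esym f s (m + 1))
        - (s.card : ℝ) * ∑ i ∈ s, f i * (f i * esym f (s.erase i) m) := by
    rw [← hI1]; ring
  rw [h3]
  nlinarith [hch2]

theorem esym_le {s : Finset α} (hf : ∀ a ∈ s, 0 ≤ f a) (m : ℕ) :
    (s.card : ℝ) ^ m * esym f s m ≤ (s.card.choose m : ℝ) * (∑ a ∈ s, f a) ^ m := by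
  have hS : 0 ≤ ∑ a ∈ s, f a := Finset.sum_nonneg hf
  induction m with
  | zero => simp [esym_zero]
  | succ m ih =>
    rcases Nat.eq_zero_or_pos m with rfl | hm
    · rw [esym_one, pow_one, pow_one, Nat.choose_one_right]
    · by_cases hcard : s.card ≤ m
      · rw [esym_of_lt f (lt_of_le_of_lt hcard (Nat.lt_succ_self m)), mul_zero]
        positivity
      · push_neg at hcard
        have hrec : (s.card : ℝ) * (((m : ℝ) + 1) * esym f s (m + 1))
            ≤ ((s.card : ℝ) - (m : ℝ)) * (∑ a ∈ s, f a) * esym f s m := by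
          obtain ⟨m', rfl⟩ := Nat.exists_eq_succ_of_ne_zero hm.ne'
          have h := esym_rec f hf m'
          push_cast at h ⊢
          linarith [h]
        have hnpow : (0 : ℝ) ≤ (s.card : ℝ) ^ m := by positivity
        have hnm : (0 : ℝ) ≤ ((s.card : ℝ) - (m : ℝ)) * (∑ a ∈ s, f a) := by
          apply mul_nonneg _ hS
          have : (m : ℝ) ≤ (s.card : ℝ) := by exact_mod_cast hcard.le
          linarith
        have step1 := mul_le_mul_of_nonneg_left hrec hnpow
        have step2 := mul_le_mul_of_nonneg_left ih hnm
        have hchoose : ((s.card.choose (m + 1) : ℝ)) * ((m : ℝ) + 1)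
            = (s.card.choose m : ℝ) * ((s.card : ℝ) - (m : ℝ)) := by
          have h := Nat.choose_succ_right_eq s.card m
          have h2 : ((s.card.choose (m + 1) * (m + 1) : ℕ) : ℝ)
              = ((s.card.choose m * (s.card - m) : ℕ) : ℝ) := by
            exact congrArg (fun x : ℕ => (x : ℝ)) h
          push_cast [Nat.cast_sub hcard.le] at h2
          linarith [h2]
        have final : ((m : ℝ) + 1) * ((s.card : ℝ) ^ (m + 1) * esym f s (m + 1))
            ≤ ((m : ℝ) + 1) * ((s.card.choose (m + 1) : ℝ) * (∑ a ∈ s, f a) ^ (m + 1)) := by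
          calc ((m : ℝ) + 1) * ((s.card : ℝ) ^ (m + 1) * esym f s (m + 1))
              = (s.card : ℝ) ^ m * ((s.card : ℝ) * (((m : ℝ) + 1) * esym f s (m + 1))) := by
                rw [pow_succ]; ring
            _ ≤ (s.card : ℝ) ^ m * (((s.card : ℝ) - (m : ℝ)) * (∑ a ∈ s, f a) * esym f s m) :=
                step1
            _ = ((s.card : ℝ) - (m : ℝ)) * (∑ a ∈ s, f a) * ((s.card : ℝ) ^ m * esym f s m) := by
                ring
            _ ≤ ((s.card : ℝ) - (m : ℝ)) * (∑ a ∈ s, f a)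
                  * ((s.card.choose m : ℝ) * (∑ a ∈ s, f a) ^ m) := step2
            _ = ((s.card.choose m : ℝ) * ((s.card : ℝ) - (m : ℝ))) * (∑ a ∈ s, f a) ^ (m + 1) := by
                rw [pow_succ]; ring
            _ = ((m : ℝ) + 1) * ((s.card.choose (m + 1) : ℝ) * (∑ a ∈ s, f a) ^ (m + 1)) := by
                rw [← hchoose]; ring
        have hm1 : (0 : ℝ) < (m : ℝ) + 1 := by positivity
        exact le_of_mul_le_mul_left final hm1

lemma exp_quad {x : ℝ} (hx : |x| ≤ 1) : Real.exp x ≤ 1 + x + (3 / 4) * x ^ 2 := by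
  have h := Real.exp_bound hx (n := 2) (by norm_num)
  have h2 : ∑ m ∈ Finset.range 2, x ^ m / m.factorial = 1 + x := by
    simp [Finset.sum_range_succ]
  rw [h2] at h
  have h3 := (abs_le.1 h).2
  rw [sq_abs] at h3
  norm_num [Nat.factorial] at h3
  linarith

lemma mgf_le [Fintype α] (w : α → ℝ) (d : ℝ) (hd : 0 < d) (hw0 : ∀ a, 0 ≤ w a)
    (hwd : ∀ a, w a ≤ d) (t : ℝ) (m : ℕ) (hn : 0 < Fintype.card α) :
    ∑ R ∈ Finset.powersetCard m (Finset.univ : Finset α), Real.exp (t * ∑ a ∈ R, w a)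
      ≤ ((Fintype.card α).choose m : ℝ) *
        Real.exp ((m : ℝ) * (∑ a, w a) / (Fintype.card α : ℝ) / d * (Real.exp (t * d) - 1)) := by
  classical
  set n := Fintype.card α with hndef
  have hnR : (0 : ℝ) < (n : ℝ) := by exact_mod_cast hn
  set Z : ℝ := ∑ a, Real.exp (t * w a) with hZ
  have hZ0 : 0 ≤ Z := Finset.sum_nonneg fun a _ => (Real.exp_pos _).le
  -- step 1 : the sum is esym and bounded by choose * (Z/n)^m
  have hstep1 : ∑ R ∈ Finset.powersetCard m (Finset.univ : Finset α),
      Real.exp (t * ∑ a ∈ R, w a) = esym (fun a => Real.exp (t * w a)) Finset.univ m := by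
    refine Finset.sum_congr rfl fun R _ => ?_
    rw [Finset.mul_sum, Real.exp_sum]
  have hesym := esym_le (fun a => Real.exp (t * w a))
    (s := (Finset.univ : Finset α)) (fun a _ => (Real.exp_pos _).le) m
  rw [Finset.card_univ, ← hndef] at hesym
  have hstep2 : esym (fun a => Real.exp (t * w a)) Finset.univ m
      ≤ (n.choose m : ℝ) * (Z / n) ^ m := by
    have hdiv : esym (fun a => Real.exp (t * w a)) Finset.univ m
        ≤ (n.choose m : ℝ) * Z ^ m / (n : ℝ) ^ m := by
      rw [le_div_iff₀ (by positivity : (0 : ℝ) < (n : ℝ) ^ m)]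
      calc esym (fun a => Real.exp (t * w a)) Finset.univ m * (n : ℝ) ^ m
          = (n : ℝ) ^ m * esym (fun a => Real.exp (t * w a)) Finset.univ m := by ring
        _ ≤ (n.choose m : ℝ) * Z ^ m := hesym
    calc esym (fun a => Real.exp (t * w a)) Finset.univ m
        ≤ (n.choose m : ℝ) * Z ^ m / (n : ℝ) ^ m := hdiv
      _ = (n.choose m : ℝ) * (Z / n) ^ m := by rw [div_pow, mul_div_assoc]
  -- step 2 : Z/n ≤ exp(c)
  set c : ℝ := (∑ a, w a) / ((n : ℝ) * d) * (Real.exp (t * d) - 1) with hc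
  have hzn : Z / n ≤ Real.exp c := by
    have hpt : ∀ a : α, Real.exp (t * w a) ≤ 1 + w a / d * (Real.exp (t * d) - 1) := by
      intro a
      have hla : 0 ≤ w a / d := div_nonneg (hw0 a) hd.le
      have hlb : 0 ≤ 1 - w a / d := by
        have : w a / d ≤ 1 := (div_le_one hd).2 (hwd a)
        linarith
      have hcx := convexOn_exp.2 (Set.mem_univ (t * d)) (Set.mem_univ (0 : ℝ))
        hla hlb (by ring)
      simp only [smul_eq_mul, mul_zero, add_zero, Real.exp_zero, mul_one] at hcx
      have harg : w a / d * (t * d) = t * w a := by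
        field_simp
      rw [harg] at hcx
      linarith
    have hZle : Z ≤ (n : ℝ) + (∑ a, w a) / d * (Real.exp (t * d) - 1) := by
      calc Z ≤ ∑ a : α, (1 + w a / d * (Real.exp (t * d) - 1)) :=
            Finset.sum_le_sum fun a _ => hpt a
        _ = (n : ℝ) + (∑ a, w a) / d * (Real.exp (t * d) - 1) := by
            rw [Finset.sum_add_distrib, Finset.sum_const, Finset.card_univ, nsmul_eq_mul,
              mul_one, ← Finset.sum_mul, ← Finset.sum_div]
    have h1c : Z / n ≤ 1 + c := by
      rw [div_le_iff₀ hnR]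
      have : (1 + c) * n = (n : ℝ) + (∑ a, w a) / d * (Real.exp (t * d) - 1) := by
        rw [hc]
        field_simp
      rw [this]
      exact hZle
    calc Z / n ≤ 1 + c := h1c
      _ ≤ Real.exp c := by linarith [Real.add_one_le_exp c]
  -- combine
  have hpow : (Z / n) ^ m ≤ Real.exp c ^ m :=
    pow_le_pow_left₀ (div_nonneg hZ0 hnR.le) hzn m
  have hfin : Real.exp c ^ m = Real.exp ((m : ℝ) * (∑ a, w a) / (n : ℝ) / d
      * (Real.exp (t * d) - 1)) := by
    rw [← Real.exp_nat_mul]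
    congr 1
    rw [hc]
    field_simp
  calc ∑ R ∈ Finset.powersetCard m (Finset.univ : Finset α), Real.exp (t * ∑ a ∈ R, w a)
      = esym (fun a => Real.exp (t * w a)) Finset.univ m := hstep1
    _ ≤ (n.choose m : ℝ) * (Z / n) ^ m := hstep2
    _ ≤ (n.choose m : ℝ) * Real.exp c ^ m := by
        exact mul_le_mul_of_nonneg_left hpow (by positivity)
    _ = (n.choose m : ℝ) * Real.exp ((m : ℝ) * (∑ a, w a) / (n : ℝ) / d
        * (Real.exp (t * d) - 1)) := by rw [hfin]

lemma markov_count {β : Type*} (P : Finset β) (W : β → ℝ) (t c : ℝ) :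
    (((P.filter fun R => c ≤ t * W R).card : ℝ))
      ≤ Real.exp (-c) * ∑ R ∈ P, Real.exp (t * W R) := by
  classical
  calc ((P.filter fun R => c ≤ t * W R).card : ℝ)
      = ∑ _R ∈ P.filter fun R => c ≤ t * W R, (1 : ℝ) := by simp
    _ ≤ ∑ R ∈ P.filter fun R => c ≤ t * W R, Real.exp (-c) * Real.exp (t * W R) := by
        refine Finset.sum_le_sum fun R hR => ?_
        rw [← Real.exp_add]
        have := (Finset.mem_filter.1 hR).2
        have h0 : (0 : ℝ) ≤ -c + t * W R := by linarith
        calc (1 : ℝ) = Real.exp 0 := Real.exp_zero.symm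
          _ ≤ Real.exp (-c + t * W R) := Real.exp_le_exp.2 h0
    _ ≤ ∑ R ∈ P, Real.exp (-c) * Real.exp (t * W R) := by
        refine Finset.sum_le_sum_of_subset_of_nonneg (Finset.filter_subset _ _)
          fun R _ _ => by positivity
    _ = Real.exp (-c) * ∑ R ∈ P, Real.exp (t * W R) := by rw [Finset.mul_sum]

lemma tail_two_sided [Fintype α] (w : α → ℝ) (d : ℝ) (hd : 0 < d) (hw0 : ∀ a, 0 ≤ w a)
    (hwd : ∀ a, w a ≤ d) (m : ℕ) (hn : 0 < Fintype.card α) (μ : ℝ)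
    (hμ : μ = (m : ℝ) * (∑ a, w a) / (Fintype.card α : ℝ)) (β : ℝ) (hβ0 : 0 ≤ β)
    (hβ1 : β ≤ 1) :
    ((((Finset.powersetCard m (Finset.univ : Finset α)).filter fun R =>
        ¬((1 - β) * μ ≤ ∑ a ∈ R, w a ∧ (∑ a ∈ R, w a) ≤ (1 + β) * μ)).card : ℝ))
      ≤ 2 * (((Fintype.card α).choose m : ℝ)) * Real.exp (-(5 / 16) * β ^ 2 * μ / d) := by
  classical
  set n := Fintype.card α with hndef
  have hnR : (0 : ℝ) < (n : ℝ) := by exact_mod_cast hn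
  have hw : 0 ≤ ∑ a, w a := Finset.sum_nonneg fun a _ => hw0 a
  have hμ0 : 0 ≤ μ := by
    rw [hμ]; positivity
  have hμd : 0 ≤ μ / d := div_nonneg hμ0 hd.le
  -- generic one-tail bound
  have main : ∀ t c : ℝ,
      μ / d * (Real.exp (t * d) - 1) - c ≤ -(5 / 16) * β ^ 2 * μ / d →
      (((Finset.powersetCard m (Finset.univ : Finset α)).filter fun R =>
          c ≤ t * ∑ a ∈ R, w a).card : ℝ)
        ≤ ((n.choose m : ℝ)) * Real.exp (-(5 / 16) * β ^ 2 * μ / d) := by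
    intro t c hE
    calc (((Finset.powersetCard m (Finset.univ : Finset α)).filter fun R =>
          c ≤ t * ∑ a ∈ R, w a).card : ℝ)
        ≤ Real.exp (-c) * ∑ R ∈ Finset.powersetCard m (Finset.univ : Finset α),
            Real.exp (t * ∑ a ∈ R, w a) := markov_count _ _ t c
      _ ≤ Real.exp (-c) * (((n.choose m : ℝ)) *
            Real.exp ((m : ℝ) * (∑ a, w a) / (n : ℝ) / d * (Real.exp (t * d) - 1))) := by
          exact mul_le_mul_of_nonneg_left (mgf_le w d hd hw0 hwd t m hn) (Real.exp_pos _).le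
      _ = ((n.choose m : ℝ)) * Real.exp (μ / d * (Real.exp (t * d) - 1) - c) := by
          rw [mul_left_comm, ← Real.exp_add]
          congr 2
          rw [hμ]
          ring
      _ ≤ ((n.choose m : ℝ)) * Real.exp (-(5 / 16) * β ^ 2 * μ / d) := by
          exact mul_le_mul_of_nonneg_left (Real.exp_le_exp.2 hE) (by positivity)
  -- upper tail
  have hup : (((Finset.powersetCard m (Finset.univ : Finset α)).filter fun R =>
      (1 + β) * μ < ∑ a ∈ R, w a).card : ℝ)
      ≤ ((n.choose m : ℝ)) * Real.exp (-(5 / 16) * β ^ 2 * μ / d) := by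
    set t : ℝ := β / (2 * d) with ht
    set c : ℝ := t * ((1 + β) * μ) with hc
    have htd : t * d = β / 2 := by rw [ht]; field_simp
    have ht0 : 0 ≤ t := by positivity
    have hsub : ((Finset.powersetCard m (Finset.univ : Finset α)).filter fun R =>
        (1 + β) * μ < ∑ a ∈ R, w a)
        ⊆ ((Finset.powersetCard m (Finset.univ : Finset α)).filter fun R =>
        c ≤ t * ∑ a ∈ R, w a) := by
      intro R hR
      obtain ⟨hP, hlt⟩ := Finset.mem_filter.1 hR
      refine Finset.mem_filter.2 ⟨hP, ?_⟩
      rw [hc]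
      exact mul_le_mul_of_nonneg_left hlt.le ht0
    have hscal : Real.exp (β / 2) - 1 - β / 2 * (1 + β) ≤ -(5 / 16) * β ^ 2 := by
      have hq := exp_quad (x := β / 2) (by rw [abs_of_nonneg (by linarith : (0:ℝ) ≤ β / 2)]; linarith)
      nlinarith
    have hE : μ / d * (Real.exp (t * d) - 1) - c ≤ -(5 / 16) * β ^ 2 * μ / d := by
      rw [htd, hc, ht]
      have := mul_le_mul_of_nonneg_left hscal hμd
      calc μ / d * (Real.exp (β / 2) - 1) - β / (2 * d) * ((1 + β) * μ)
          = μ / d * (Real.exp (β / 2) - 1 - β / 2 * (1 + β)) := by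
            field_simp
        _ ≤ μ / d * (-(5 / 16) * β ^ 2) := this
        _ = -(5 / 16) * β ^ 2 * μ / d := by ring
    exact le_trans (by exact_mod_cast Nat.cast_le.2 (Finset.card_le_card hsub)) (main t c hE)
  -- lower tail
  have hlo : (((Finset.powersetCard m (Finset.univ : Finset α)).filter fun R =>
      (∑ a ∈ R, w a) < (1 - β) * μ).card : ℝ)
      ≤ ((n.choose m : ℝ)) * Real.exp (-(5 / 16) * β ^ 2 * μ / d) := by
    set t : ℝ := -(β / (2 * d)) with ht
    set c : ℝ := t * ((1 - β) * μ) with hc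
    have htd : t * d = -(β / 2) := by rw [ht]; field_simp
    have ht0 : t ≤ 0 := by
      rw [ht]
      have : 0 ≤ β / (2 * d) := by positivity
      linarith
    have hsub : ((Finset.powersetCard m (Finset.univ : Finset α)).filter fun R =>
        (∑ a ∈ R, w a) < (1 - β) * μ)
        ⊆ ((Finset.powersetCard m (Finset.univ : Finset α)).filter fun R =>
        c ≤ t * ∑ a ∈ R, w a) := by
      intro R hR
      obtain ⟨hP, hlt⟩ := Finset.mem_filter.1 hR
      refine Finset.mem_filter.2 ⟨hP, ?_⟩
      rw [hc]
      exact mul_le_mul_of_nonpos_left hlt.le ht0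
    have hscal : Real.exp (-(β / 2)) - 1 + β / 2 * (1 - β) ≤ -(5 / 16) * β ^ 2 := by
      have hq := exp_quad (x := -(β / 2)) (by rw [abs_neg, abs_of_nonneg (by linarith : (0:ℝ) ≤ β / 2)]; linarith)
      nlinarith
    have hE : μ / d * (Real.exp (t * d) - 1) - c ≤ -(5 / 16) * β ^ 2 * μ / d := by
      rw [htd, hc, ht]
      have := mul_le_mul_of_nonneg_left hscal hμd
      calc μ / d * (Real.exp (-(β / 2)) - 1) - -(β / (2 * d)) * ((1 - β) * μ)
          = μ / d * (Real.exp (-(β / 2)) - 1 + β / 2 * (1 - β)) := by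
            field_simp
            ring
        _ ≤ μ / d * (-(5 / 16) * β ^ 2) := this
        _ = -(5 / 16) * β ^ 2 * μ / d := by ring
    exact le_trans (by exact_mod_cast Nat.cast_le.2 (Finset.card_le_card hsub)) (main t c hE)
  -- combine
  have hsplit : ((Finset.powersetCard m (Finset.univ : Finset α)).filter fun R =>
      ¬((1 - β) * μ ≤ ∑ a ∈ R, w a ∧ (∑ a ∈ R, w a) ≤ (1 + β) * μ))
      ⊆ ((Finset.powersetCard m (Finset.univ : Finset α)).filter fun R =>
          (∑ a ∈ R, w a) < (1 - β) * μ)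
        ∪ ((Finset.powersetCard m (Finset.univ : Finset α)).filter fun R =>
          (1 + β) * μ < ∑ a ∈ R, w a) := by
    intro R hR
    obtain ⟨hP, hnot⟩ := Finset.mem_filter.1 hR
    rcases not_and_or.1 hnot with h | h
    · exact Finset.mem_union_left _ (Finset.mem_filter.2 ⟨hP, not_le.1 h⟩)
    · exact Finset.mem_union_right _ (Finset.mem_filter.2 ⟨hP, not_le.1 h⟩)
  have hcard := Finset.card_le_card hsplit
  have hcard2 := Finset.card_union_le
    ((Finset.powersetCard m (Finset.univ : Finset α)).filter fun R =>
      (∑ a ∈ R, w a) < (1 - β) * μ)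
    ((Finset.powersetCard m (Finset.univ : Finset α)).filter fun R =>
      (1 + β) * μ < ∑ a ∈ R, w a)
  have : (((Finset.powersetCard m (Finset.univ : Finset α)).filter fun R =>
      ¬((1 - β) * μ ≤ ∑ a ∈ R, w a ∧ (∑ a ∈ R, w a) ≤ (1 + β) * μ)).card : ℝ)
      ≤ (((Finset.powersetCard m (Finset.univ : Finset α)).filter fun R =>
          (∑ a ∈ R, w a) < (1 - β) * μ).card : ℝ)
        + (((Finset.powersetCard m (Finset.univ : Finset α)).filter fun R =>
          (1 + β) * μ < ∑ a ∈ R, w a).card : ℝ) := by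
    exact_mod_cast le_trans hcard hcard2
  linarith

end EdgeConc

set_option maxHeartbeats 1000000 in
/-- **Concentration of the number of edges between two random subsets.**  Let `(X, Y, E)`
be a bipartite graph with all degrees at most `d`, let `k ≤ |X|`, `l ≤ |Y|` and
`s = k·l·|E|/(|X|·|Y|)`.  For any `0 ≤ γ < 1/2`, the probability (over a uniformly random
`k`-subset `S` of `X` and an independent uniformly random `l`-subset `T` of `Y`, expressed
by counting) that `|E(S, T)| ∉ [(1−γ)s, (1+γ)s]` is at most `4·exp(−γ²·s/(54·d))`. -/
theorem edge_concentration_two_sided {X Y : Type*} [Fintype X] [Fintype Y]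
    (E : Finset (X × Y)) (d : ℕ)
    (hdX : ∀ x : X, (E.filter fun e => e.1 = x).card ≤ d)
    (hdY : ∀ y : Y, (E.filter fun e => e.2 = y).card ≤ d)
    (k l : ℕ) (hk : k ≤ Fintype.card X) (hl : l ≤ Fintype.card Y)
    (s : ℝ)
    (hs : s = (k : ℝ) * (l : ℝ) * (E.card : ℝ) /
        ((Fintype.card X : ℝ) * (Fintype.card Y : ℝ)))
    (γ : ℝ) (hγ0 : 0 ≤ γ) (hγ : γ < 1 / 2) :
    (((Finset.powersetCard k (Finset.univ : Finset X) ×ˢ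
            Finset.powersetCard l (Finset.univ : Finset Y)).filter
          fun p : Finset X × Finset Y =>
            ¬((1 - γ) * s ≤ (edgeCount E p.1 p.2 : ℝ) ∧
                (edgeCount E p.1 p.2 : ℝ) ≤ (1 + γ) * s)).card : ℝ) /
        (((Fintype.card X).choose k : ℝ) * ((Fintype.card Y).choose l : ℝ)) ≤
      4 * Real.exp (-(γ ^ 2 * s) / (54 * (d : ℝ))) := by
  classical
  -- abbreviations
  have hCX : 0 < ((Fintype.card X).choose k : ℝ) := by
    exact_mod_cast Nat.choose_pos hk
  have hCY : 0 < ((Fintype.card Y).choose l : ℝ) := by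
    exact_mod_cast Nat.choose_pos hl
  by_cases hE : E = ∅
  · -- trivial case : no edges
    have hs0 : s = 0 := by rw [hs, hE]; simp
    have hfilter : ((Finset.powersetCard k (Finset.univ : Finset X) ×ˢ
        Finset.powersetCard l (Finset.univ : Finset Y)).filter
          fun p : Finset X × Finset Y =>
            ¬((1 - γ) * s ≤ (edgeCount E p.1 p.2 : ℝ) ∧
                (edgeCount E p.1 p.2 : ℝ) ≤ (1 + γ) * s)) = ∅ := by
      refine Finset.filter_false_of_mem fun p _ => ?_
      have h0 : edgeCount E p.1 p.2 = 0 := by simp [edgeCount, hE]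
      rw [h0, hs0]
      norm_num
    rw [hfilter]
    simp only [Finset.card_empty, Nat.cast_zero, zero_div]
    positivity
  -- main case
  obtain ⟨e0, he0⟩ := Finset.nonempty_of_ne_empty hE
  haveI : Nonempty X := ⟨e0.1⟩
  haveI : Nonempty Y := ⟨e0.2⟩
  have hnX : 0 < Fintype.card X := Fintype.card_pos
  have hnY : 0 < Fintype.card Y := Fintype.card_pos
  have hnXR : (0 : ℝ) < (Fintype.card X : ℝ) := by exact_mod_cast hnX
  have hnYR : (0 : ℝ) < (Fintype.card Y : ℝ) := by exact_mod_cast hnY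
  have hd : 0 < d := by
    rcases Nat.eq_zero_or_pos d with h0 | h
    · exfalso
      have hmem : e0 ∈ E.filter fun e => e.1 = e0.1 := Finset.mem_filter.2 ⟨he0, rfl⟩
      have h1 := Finset.card_pos.2 ⟨e0, hmem⟩
      have h2 := hdX e0.1
      omega
    · exact h
  have hdR : (0 : ℝ) < (d : ℝ) := by exact_mod_cast hd
  -- fiberwise counting identities
  have h1 : ∀ S : Finset X, ∑ x ∈ S, ((E.filter fun e => e.1 = x).card : ℝ)
      = ((E.filter fun e => e.1 ∈ S).card : ℝ) := by
    intro S
    have := Finset.card_eq_sum_card_fiberwise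
      (s := E.filter fun e => e.1 ∈ S) (t := S) (f := fun e => e.1)
      (fun e he => (Finset.mem_filter.1 he).2)
    rw [this]
    push_cast
    refine Finset.sum_congr rfl fun x hx => ?_
    rw [Finset.filter_filter]
    have heq : (E.filter fun a => a.1 ∈ S ∧ a.1 = x) = E.filter fun e => e.1 = x := by
      refine Finset.filter_congr fun e _ => ?_
      constructor
      · exact fun h => h.2
      · exact fun h => ⟨by rw [h]; exact hx, h⟩
    rw [heq]
  have h2 : ∀ S : Finset X, ∑ y : Y, ((E.filter fun e => e.1 ∈ S ∧ e.2 = y).card : ℝ)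
      = ((E.filter fun e => e.1 ∈ S).card : ℝ) := by
    intro S
    have := Finset.card_eq_sum_card_fiberwise
      (s := E.filter fun e => e.1 ∈ S) (t := (Finset.univ : Finset Y)) (f := fun e => e.2)
      (fun e _ => Finset.mem_univ _)
    rw [this]
    push_cast
    refine Finset.sum_congr rfl fun y _ => ?_
    rw [Finset.filter_filter]
  have h3 : ∀ (S : Finset X) (T : Finset Y),
      ∑ y ∈ T, ((E.filter fun e => e.1 ∈ S ∧ e.2 = y).card : ℝ) = (edgeCount E S T : ℝ) := by
    intro S T
    have := Finset.card_eq_sum_card_fiberwise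
      (s := E.filter fun e => e.1 ∈ S ∧ e.2 ∈ T) (t := T) (f := fun e => e.2)
      (fun e he => (Finset.mem_filter.1 he).2.2)
    rw [edgeCount, this]
    push_cast
    refine Finset.sum_congr rfl fun y hy => ?_
    rw [Finset.filter_filter]
    have heq : (E.filter fun a => (a.1 ∈ S ∧ a.2 ∈ T) ∧ a.2 = y)
        = E.filter fun e => e.1 ∈ S ∧ e.2 = y := by
      refine Finset.filter_congr fun e _ => ?_
      constructor
      · exact fun h => ⟨h.1.1, h.2⟩
      · exact fun h => ⟨⟨h.1, by rw [h.2]; exact hy⟩, h.2⟩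
    rw [heq]
  -- parameters
  set α' : ℝ := γ / 3 with hα'
  have hα'0 : 0 ≤ α' := by positivity
  have hα'1 : α' ≤ 1 / 6 := by rw [hα']; linarith
  set μ1 : ℝ := (k : ℝ) * (E.card : ℝ) / (Fintype.card X : ℝ) with hμ1
  set ε : ℝ := Real.exp (-(γ ^ 2 * s) / (54 * (d : ℝ))) with hε
  have hε0 : 0 < ε := Real.exp_pos _
  have hs0 : 0 ≤ s := by rw [hs]; positivity
  have hμ10 : 0 ≤ μ1 := by rw [hμ1]; positivity
  have hsμ1 : s ≤ μ1 := by
    have hseq : s = μ1 * ((l : ℝ) / (Fintype.card Y : ℝ)) := by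
      rw [hs, hμ1]; field_simp
    have hl1 : (l : ℝ) / (Fintype.card Y : ℝ) ≤ 1 := by
      rw [div_le_one hnYR]; exact_mod_cast hl
    have hl0 : 0 ≤ (l : ℝ) / (Fintype.card Y : ℝ) := by positivity
    nlinarith [hμ10]
  have hls : (l : ℝ) * μ1 / (Fintype.card Y : ℝ) = s := by
    rw [hs, hμ1]; field_simp
  -- level-1 tail bound
  have hbadS : (((Finset.powersetCard k (Finset.univ : Finset X)).filter fun S =>
      ¬((1 - α') * μ1 ≤ ((E.filter fun e => e.1 ∈ S).card : ℝ) ∧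
        ((E.filter fun e => e.1 ∈ S).card : ℝ) ≤ (1 + α') * μ1)).card : ℝ)
      ≤ 2 * ((Fintype.card X).choose k : ℝ) * ε := by
    have htail := EdgeConc.tail_two_sided (fun x : X => ((E.filter fun e => e.1 = x).card : ℝ))
      (d : ℝ) hdR (fun x => Nat.cast_nonneg _) (fun x => by simpa using hdX x) k hnX μ1
      (by
        rw [h1 Finset.univ]
        have huniv : (E.filter fun e => e.1 ∈ (Finset.univ : Finset X)) = E :=
          Finset.filter_true_of_mem fun e _ => Finset.mem_univ _
        rw [huniv]) α' hα'0 (by linarith)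
    simp only [h1] at htail
    have hexp : Real.exp (-(5 / 16) * α' ^ 2 * μ1 / (d : ℝ)) ≤ ε := by
      rw [hε]
      refine Real.exp_le_exp.2 ?_
      rw [div_le_div_iff₀ hdR (by positivity : (0 : ℝ) < 54 * (d : ℝ)), hα']
      have key : γ ^ 2 * s * (d : ℝ) ≤ γ ^ 2 * μ1 * (d : ℝ) :=
        mul_le_mul_of_nonneg_right (mul_le_mul_of_nonneg_left hsμ1 (sq_nonneg γ)) hdR.le
      have key2 : 0 ≤ γ ^ 2 * μ1 * (d : ℝ) :=
        mul_nonneg (mul_nonneg (sq_nonneg γ) hμ10) hdR.le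
      nlinarith [key, key2]
    exact le_trans htail (mul_le_mul_of_nonneg_left hexp (by positivity))
  -- level-2 tail bound, for every S
  have hbadT : ∀ S : Finset X,
      (((Finset.powersetCard l (Finset.univ : Finset Y)).filter fun T =>
        ¬((1 - α') * ((l : ℝ) * ((E.filter fun e => e.1 ∈ S).card : ℝ) / (Fintype.card Y : ℝ))
            ≤ (edgeCount E S T : ℝ) ∧
          (edgeCount E S T : ℝ)
            ≤ (1 + α') * ((l : ℝ) * ((E.filter fun e => e.1 ∈ S).card : ℝ)
              / (Fintype.card Y : ℝ)))).card : ℝ)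
      ≤ 2 * ((Fintype.card Y).choose l : ℝ) *
          Real.exp (-(5 / 16) * α' ^ 2 *
            ((l : ℝ) * ((E.filter fun e => e.1 ∈ S).card : ℝ) / (Fintype.card Y : ℝ))
            / (d : ℝ)) := by
    intro S
    have hwdY : ∀ y : Y, ((E.filter fun e => e.1 ∈ S ∧ e.2 = y).card : ℝ) ≤ (d : ℝ) := by
      intro y
      have hsub : (E.filter fun e => e.1 ∈ S ∧ e.2 = y) ⊆ E.filter fun e => e.2 = y := by
        intro e he
        obtain ⟨heE, hp⟩ := Finset.mem_filter.1 he
        exact Finset.mem_filter.2 ⟨heE, hp.2⟩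
      have := le_trans (Finset.card_le_card hsub) (hdY y)
      exact_mod_cast this
    have htail := EdgeConc.tail_two_sided
      (fun y : Y => ((E.filter fun e => e.1 ∈ S ∧ e.2 = y).card : ℝ))
      (d : ℝ) hdR (fun y => Nat.cast_nonneg _) (fun y => by simpa using hwdY y) l hnY
      ((l : ℝ) * (∑ y : Y, ((E.filter fun e => e.1 ∈ S ∧ e.2 = y).card : ℝ))
        / (Fintype.card Y : ℝ)) rfl α' hα'0 (by linarith)
    have heuniv : edgeCount E S (Finset.univ : Finset Y) = (E.filter fun e => e.1 ∈ S).card := by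
      refine congrArg Finset.card (Finset.filter_congr fun e _ => ?_)
      simp
    simp only [h3, heuniv] at htail
    exact htail
  -- name the bad sets
  set badS := (Finset.powersetCard k (Finset.univ : Finset X)).filter fun S =>
      ¬((1 - α') * μ1 ≤ ((E.filter fun e => e.1 ∈ S).card : ℝ) ∧
        ((E.filter fun e => e.1 ∈ S).card : ℝ) ≤ (1 + α') * μ1) with hbadSdef
  set bad := ((Finset.powersetCard k (Finset.univ : Finset X) ×ˢ
      Finset.powersetCard l (Finset.univ : Finset Y)).filter
        fun p : Finset X × Finset Y =>
          ¬((1 - γ) * s ≤ (edgeCount E p.1 p.2 : ℝ) ∧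
              (edgeCount E p.1 p.2 : ℝ) ≤ (1 + γ) * s)) with hbaddef
  rw [div_le_iff₀ (by positivity)]
  have hfib : (bad.card : ℝ) = ∑ S ∈ Finset.powersetCard k (Finset.univ : Finset X),
      ((bad.filter fun p => p.1 = S).card : ℝ) := by
    have h0 := Finset.card_eq_sum_card_fiberwise
      (s := bad) (t := Finset.powersetCard k (Finset.univ : Finset X)) (f := Prod.fst)
      (fun p hp => (Finset.mem_product.1 (Finset.mem_filter.1 (hbaddef ▸ hp)).1).1)
    exact_mod_cast congrArg (Nat.cast : ℕ → ℝ) h0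
  have hfiber_bound : ∀ S ∈ Finset.powersetCard k (Finset.univ : Finset X),
      ((bad.filter fun p => p.1 = S).card : ℝ)
        ≤ (if S ∈ badS then (1 : ℝ) else 0) * ((Fintype.card Y).choose l : ℝ)
          + 2 * ((Fintype.card Y).choose l : ℝ) * ε := by
    intro S hS
    have h2CYε : (0 : ℝ) ≤ 2 * ((Fintype.card Y).choose l : ℝ) * ε := by positivity
    by_cases hSbad : S ∈ badS
    · rw [if_pos hSbad, one_mul]
      have hsub : bad.filter (fun p => p.1 = S)
          ⊆ ({S} : Finset (Finset X)) ×ˢ Finset.powersetCard l (Finset.univ : Finset Y) := by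
        intro p hp
        obtain ⟨hpbad, hp1⟩ := Finset.mem_filter.1 hp
        have hmem := (Finset.mem_filter.1 (hbaddef ▸ hpbad)).1
        exact Finset.mem_product.2 ⟨Finset.mem_singleton.2 hp1, (Finset.mem_product.1 hmem).2⟩
      have hc := Finset.card_le_card hsub
      have hcp : (({S} : Finset (Finset X)) ×ˢ
          Finset.powersetCard l (Finset.univ : Finset Y)).card = (Fintype.card Y).choose l := by
        rw [Finset.card_product, Finset.card_singleton, one_mul, Finset.card_powersetCard,
          Finset.card_univ]
      have hcc : ((bad.filter fun p => p.1 = S).card : ℝ)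
          ≤ ((Fintype.card Y).choose l : ℝ) := by
        rw [← hcp]
        exact_mod_cast hc
      linarith
    · rw [if_neg hSbad, zero_mul, zero_add]
      have hgood : (1 - α') * μ1 ≤ ((E.filter fun e => e.1 ∈ S).card : ℝ) ∧
          ((E.filter fun e => e.1 ∈ S).card : ℝ) ≤ (1 + α') * μ1 := by
        by_contra hcon
        exact hSbad (hbadSdef ▸ Finset.mem_filter.2 ⟨hS, hcon⟩)
      have hlY : (0 : ℝ) ≤ (l : ℝ) / (Fintype.card Y : ℝ) := by positivity
      have hq : (l : ℝ) / (Fintype.card Y : ℝ) * μ1 = s := by rw [← hls]; ring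
      set a : ℝ := ((E.filter fun e => e.1 ∈ S).card : ℝ) with ha
      have hm2hi : (l : ℝ) * a / (Fintype.card Y : ℝ) ≤ (1 + α') * s := by
        have hmm := mul_le_mul_of_nonneg_left hgood.2 hlY
        calc (l : ℝ) * a / (Fintype.card Y : ℝ)
            = (l : ℝ) / (Fintype.card Y : ℝ) * a := by ring
          _ ≤ (l : ℝ) / (Fintype.card Y : ℝ) * ((1 + α') * μ1) := hmm
          _ = (1 + α') * ((l : ℝ) / (Fintype.card Y : ℝ) * μ1) := by ring
          _ = (1 + α') * s := by rw [hq]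
      have hm2lo : (1 - α') * s ≤ (l : ℝ) * a / (Fintype.card Y : ℝ) := by
        have hmm := mul_le_mul_of_nonneg_left hgood.1 hlY
        calc (1 - α') * s = (1 - α') * ((l : ℝ) / (Fintype.card Y : ℝ) * μ1) := by rw [hq]
          _ = (l : ℝ) / (Fintype.card Y : ℝ) * ((1 - α') * μ1) := by ring
          _ ≤ (l : ℝ) / (Fintype.card Y : ℝ) * a := hmm
          _ = (l : ℝ) * a / (Fintype.card Y : ℝ) := by ring
      have hsub : bad.filter (fun p => p.1 = S)
          ⊆ ({S} : Finset (Finset X)) ×ˢ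
            ((Finset.powersetCard l (Finset.univ : Finset Y)).filter fun T =>
              ¬((1 - α') * ((l : ℝ) * a / (Fintype.card Y : ℝ)) ≤ (edgeCount E S T : ℝ) ∧
                (edgeCount E S T : ℝ) ≤ (1 + α') * ((l : ℝ) * a / (Fintype.card Y : ℝ)))) := by
        intro p hp
        obtain ⟨hpbad, hp1⟩ := Finset.mem_filter.1 hp
        obtain ⟨hmem, hpred⟩ := Finset.mem_filter.1 (hbaddef ▸ hpbad)
        rw [hp1] at hpred
        refine Finset.mem_product.2 ⟨Finset.mem_singleton.2 hp1, ?_⟩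
        refine Finset.mem_filter.2 ⟨(Finset.mem_product.1 hmem).2, ?_⟩
        intro hTgood
        obtain ⟨hlo, hhi⟩ := hTgood
        refine hpred ⟨?_, ?_⟩
        · -- lower bound
          have c1 : (1 - α') * ((1 - α') * s) ≤ (1 - α') * ((l : ℝ) * a / (Fintype.card Y : ℝ)) :=
            mul_le_mul_of_nonneg_left hm2lo (by linarith)
          have c2 : (1 - γ) * s ≤ (1 - α') * ((1 - α') * s) := by
            rw [hα']
            nlinarith [mul_nonneg hγ0 hs0, mul_nonneg (mul_nonneg hγ0 hγ0) hs0]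
          linarith
        · -- upper bound
          have c1 : (1 + α') * ((l : ℝ) * a / (Fintype.card Y : ℝ)) ≤ (1 + α') * ((1 + α') * s) :=
            mul_le_mul_of_nonneg_left hm2hi (by linarith)
          have c2 : (1 + α') * ((1 + α') * s) ≤ (1 + γ) * s := by
            rw [hα']
            nlinarith [mul_nonneg (mul_nonneg hγ0 (by linarith : (0:ℝ) ≤ 3 - γ)) hs0]
          linarith
      have hc := Finset.card_le_card hsub
      have hcp : (({S} : Finset (Finset X)) ×ˢ
          ((Finset.powersetCard l (Finset.univ : Finset Y)).filter fun T =>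
            ¬((1 - α') * ((l : ℝ) * a / (Fintype.card Y : ℝ)) ≤ (edgeCount E S T : ℝ) ∧
              (edgeCount E S T : ℝ) ≤ (1 + α') * ((l : ℝ) * a / (Fintype.card Y : ℝ))))).card
          = ((Finset.powersetCard l (Finset.univ : Finset Y)).filter fun T =>
            ¬((1 - α') * ((l : ℝ) * a / (Fintype.card Y : ℝ)) ≤ (edgeCount E S T : ℝ) ∧
              (edgeCount E S T : ℝ) ≤ (1 + α') * ((l : ℝ) * a / (Fintype.card Y : ℝ)))).card := by
        rw [Finset.card_product, Finset.card_singleton, one_mul]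
      have hexp2 : Real.exp (-(5 / 16) * α' ^ 2 * ((l : ℝ) * a / (Fintype.card Y : ℝ)) / (d : ℝ))
          ≤ ε := by
        rw [hε]
        refine Real.exp_le_exp.2 ?_
        have k1 : (5 / 6 : ℝ) * s ≤ (l : ℝ) * a / (Fintype.card Y : ℝ) := by
          have : (0 : ℝ) ≤ (1 / 6 - α') * s :=
            mul_nonneg (by linarith) hs0
          nlinarith [hm2lo]
        rw [div_le_div_iff₀ hdR (by positivity : (0 : ℝ) < 54 * (d : ℝ)), hα']
        have k2 : γ ^ 2 * ((5 / 6 : ℝ) * s) * (d : ℝ)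
            ≤ γ ^ 2 * ((l : ℝ) * a / (Fintype.card Y : ℝ)) * (d : ℝ) :=
          mul_le_mul_of_nonneg_right (mul_le_mul_of_nonneg_left k1 (sq_nonneg γ)) hdR.le
        nlinarith [k2, mul_nonneg (mul_nonneg (sq_nonneg γ) hs0) hdR.le]
      have hbT := hbadT S
      rw [← ha] at hbT
      calc ((bad.filter fun p => p.1 = S).card : ℝ)
          ≤ (((Finset.powersetCard l (Finset.univ : Finset Y)).filter fun T =>
              ¬((1 - α') * ((l : ℝ) * a / (Fintype.card Y : ℝ)) ≤ (edgeCount E S T : ℝ) ∧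
                (edgeCount E S T : ℝ)
                  ≤ (1 + α') * ((l : ℝ) * a / (Fintype.card Y : ℝ)))).card : ℝ) := by
            rw [← hcp]; exact_mod_cast hc
        _ ≤ 2 * ((Fintype.card Y).choose l : ℝ) *
              Real.exp (-(5 / 16) * α' ^ 2 * ((l : ℝ) * a / (Fintype.card Y : ℝ)) / (d : ℝ)) :=
            hbT
        _ ≤ 2 * ((Fintype.card Y).choose l : ℝ) * ε :=
            mul_le_mul_of_nonneg_left hexp2 (by positivity)
  have hfeq : (Finset.powersetCard k (Finset.univ : Finset X)).filter (fun S => S ∈ badS)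
      = badS := by
    ext S
    simp only [Finset.mem_filter]
    constructor
    · exact fun h => h.2
    · intro h
      exact ⟨(Finset.mem_filter.1 (hbadSdef ▸ h)).1, h⟩
  have hPXcard : ((Finset.powersetCard k (Finset.univ : Finset X)).card : ℝ)
      = ((Fintype.card X).choose k : ℝ) := by
    rw [Finset.card_powersetCard, Finset.card_univ]
  calc (bad.card : ℝ)
      = ∑ S ∈ Finset.powersetCard k (Finset.univ : Finset X),
          ((bad.filter fun p => p.1 = S).card : ℝ) := hfib
    _ ≤ ∑ S ∈ Finset.powersetCard k (Finset.univ : Finset X),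
          ((if S ∈ badS then (1 : ℝ) else 0) * ((Fintype.card Y).choose l : ℝ)
            + 2 * ((Fintype.card Y).choose l : ℝ) * ε) := Finset.sum_le_sum hfiber_bound
    _ = (∑ S ∈ Finset.powersetCard k (Finset.univ : Finset X),
          (if S ∈ badS then (1 : ℝ) else 0)) * ((Fintype.card Y).choose l : ℝ)
        + ((Finset.powersetCard k (Finset.univ : Finset X)).card : ℝ)
            * (2 * ((Fintype.card Y).choose l : ℝ) * ε) := by
        rw [Finset.sum_add_distrib, ← Finset.sum_mul, Finset.sum_const, nsmul_eq_mul]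
    _ = (badS.card : ℝ) * ((Fintype.card Y).choose l : ℝ)
        + ((Fintype.card X).choose k : ℝ) * (2 * ((Fintype.card Y).choose l : ℝ) * ε) := by
        rw [Finset.sum_boole, hfeq, hPXcard]
    _ ≤ (2 * ((Fintype.card X).choose k : ℝ) * ε) * ((Fintype.card Y).choose l : ℝ)
        + ((Fintype.card X).choose k : ℝ) * (2 * ((Fintype.card Y).choose l : ℝ) * ε) := by
        have := mul_le_mul_of_nonneg_right hbadS hCY.le
        linarith
    _ = 4 * ε * (((Fintype.card X).choose k : ℝ) * ((Fintype.card Y).choose l : ℝ)) := by ring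
end
end
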